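/- arXiv:1512.04696 — 6 statements merged into one kernel-verified Lean document; each statement's English description precedes it below -/
import Mathlib

section
/- Let $Q=(q_{\mathbf{ij}})$ be a conservative n-type branching q-matrix with immigration where $h_{\mathbf{j}}=a_{\mathbf{j}}$, i.e. $q_{\mathbf{0j}}=a_{\mathbf{j}}$ and for $|\mathbf{i}|>0$, $q_{\mathbf{ij}}=\sum_{k=1}^n i_k b^{(k)}_{\mathbf{j}-\mathbf{i}+\mathbf{e}_k}\chi(\mathbf{j}-\mathbf{i}+\mathbf{e}_k\in\mathbb{Z}_+^n)+a_{\mathbf{j}-\mathbf{i}}\chi(\mathbf{j}-\mathbf{i}\in\mathbb{Z}_+^n)$. Let $\mathbf{q}=(q_1,\dots,q_n)\in(0,1]^n$ satisfy $B_i(q_1,\dots,q_n)=0$ for all $i$. Define $y_{\mathbf{j}}=q_1^{j_1}\cdots q_n^{j_n}$. Then for every $\mathbf{j}\in\mathbb{Z}_+^n$, $\sum_{\mathbf{k}\in\mathbb{Z}_+^n} q_{\mathbf{jk}}\, y_{\mathbf{k}} = A(q_1,\dots,q_n)\, y_{\mathbf{j}}$, i.e. $(y_{\mathbf{j}})$ is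 a $(-A(\mathbf{q}))$-invariant vector for $Q$. -/
open Filter Topology Set

noncomputable def gen {n : ℕ} (a : (Fin n → ℕ) → ℝ) (u : Fin n → ℝ) : ℝ :=
  ∑' j : Fin n → ℕ, a j * ∏ l, u l ^ j l

def unitvec {n : ℕ} (k : Fin n) : Fin n → ℕ := fun l => if l = k then 1 else 0

noncomputable def qmat {n : ℕ} (h a : (Fin n → ℕ) → ℝ) (b : Fin n → (Fin n → ℕ) → ℝ)
    (i j : Fin n → ℕ) : ℝ :=
  if i = 0 then h j
  else (∑ k : Fin n, if ∀ l, i l ≤ j l + unitvec k l then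
          (i k : ℝ) * b k (fun l => j l + unitvec k l - i l) else 0)
      + (if ∀ l, i l ≤ j l then a (fun l => j l - i l) else 0)

namespace Stmt4Aux

variable {n : ℕ}

lemma prodpow_pos (q : Fin n → ℝ) (hq : ∀ l, q l ∈ Ioc (0:ℝ) 1) (k : Fin n → ℕ) :
    0 < ∏ l, q l ^ k l :=
  Finset.prod_pos fun l _ => pow_pos (hq l).1 _

lemma prodpow_le_one (q : Fin n → ℝ) (hq : ∀ l, q l ∈ Ioc (0:ℝ) 1) (k : Fin n → ℕ) :
    ∏ l, q l ^ k l ≤ 1 :=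
  Finset.prod_le_one (fun l _ => (pow_pos (hq l).1 _).le)
    fun l _ => pow_le_one₀ (hq l).1.le (hq l).2

lemma key (c : (Fin n → ℕ) → ℝ) (hc : Summable c) (q : Fin n → ℝ)
    (hq : ∀ l, q l ∈ Ioc (0:ℝ) 1) :
    HasSum (fun r : Fin n → ℕ => c r * ∏ l, q l ^ r l) (gen c q) := by
  have hs : Summable (fun r : Fin n → ℕ => c r * ∏ l, q l ^ r l) := by
    refine Summable.of_abs (Summable.of_nonneg_of_le (fun r => abs_nonneg _) (fun r => ?_) hc.abs)
    rw [abs_mul, abs_of_pos (prodpow_pos q hq r)]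
    exact mul_le_of_le_one_right (abs_nonneg _) (prodpow_le_one q hq r)
  exact hs.hasSum

lemma shift (c : (Fin n → ℕ) → ℝ) (hc : Summable c) (q : Fin n → ℝ)
    (hq : ∀ l, q l ∈ Ioc (0:ℝ) 1) (p : Fin n → ℕ) :
    HasSum (fun k : Fin n → ℕ =>
        (if ∀ l, p l ≤ k l then c (fun l => k l - p l) else 0) * ∏ l, q l ^ k l)
      (gen c q * ∏ l, q l ^ p l) := by
  have inj : Function.Injective (fun r : Fin n → ℕ => r + p) := fun r s h => by
    funext l
    exact Nat.add_right_cancel (congrFun h l)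
  refine (Function.Injective.hasSum_iff inj ?_).mp ?_
  · intro k hk
    rw [if_neg, zero_mul]
    intro hle
    exact hk ⟨fun l => k l - p l, funext fun l => Nat.sub_add_cancel (hle l)⟩
  · have h := (key c hc q hq).mul_right (∏ l, q l ^ p l)
    have heq : ((fun k : Fin n → ℕ =>
        (if ∀ l, p l ≤ k l then c (fun l => k l - p l) else 0) * ∏ l, q l ^ k l)
          ∘ (fun r : Fin n → ℕ => r + p))
        = fun r : Fin n → ℕ => (c r * ∏ l, q l ^ r l) * ∏ l, q l ^ p l := by
      funext r
      simp only [Function.comp_apply, Pi.add_apply]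
      rw [if_pos (fun l => Nat.le_add_left _ _)]
      simp only [Nat.add_sub_cancel]
      rw [show (∏ l, q l ^ (r l + p l)) = (∏ l, q l ^ r l) * ∏ l, q l ^ p l by
        rw [← Finset.prod_mul_distrib]; exact Finset.prod_congr rfl fun l _ => pow_add _ _ _]
      ring
    rw [heq]
    exact h

end Stmt4Aux

/-- for the conservative n-type branching q-matrix with
immigration (resurrection = immigration, `h = a`), if `B_i(q) = 0` for all `i`
with `q ∈ (0,1]^n`, then `y_j = q^j` is a `(-A(q))`-invariant vector:
`∑_k q_{jk} y_k = A(q) y_j` for every `j`. -/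
theorem stmt_4 {n : ℕ} (a : (Fin n → ℕ) → ℝ) (b : Fin n → (Fin n → ℕ) → ℝ)
    (hann : ∀ j : Fin n → ℕ, j ≠ 0 → 0 ≤ a j)
    (hasum : Summable a)
    (haval : HasSum (fun j : {j : Fin n → ℕ // j ≠ 0} => a j.1) (-a 0))
    (hapos : 0 < -a 0)
    (hbnn : ∀ i j, j ≠ unitvec i → 0 ≤ b i j)
    (hbsum : ∀ i, Summable (b i))
    (hbval : ∀ i, HasSum (fun j : {j : Fin n → ℕ // j ≠ unitvec i} => b i j.1)
      (-(b i (unitvec i))))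
    (hbpos : ∀ i, 0 < -(b i (unitvec i)))
    (q : Fin n → ℝ) (hq : ∀ l, q l ∈ Ioc (0:ℝ) 1)
    (hqroot : ∀ i, gen (b i) q = 0) :
    ∀ j : Fin n → ℕ,
      HasSum (fun k : Fin n → ℕ => qmat a a b j k * ∏ l, q l ^ k l)
        (gen a q * ∏ l, q l ^ j l) := by
  intro j
  by_cases hj : j = (0 : Fin n → ℕ)
  · subst hj
    have h := Stmt4Aux.key a hasum q hq
    simp only [qmat, if_pos rfl]
    simpa using h
  · -- branching terms
    have hb : ∀ m : Fin n, HasSum (fun k : Fin n → ℕ =>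
        (if ∀ l, j l ≤ k l + unitvec m l then
          (j m : ℝ) * b m (fun l => k l + unitvec m l - j l) else 0) * ∏ l, q l ^ k l)
        (0 : ℝ) := by
      intro m
      by_cases hm : j m = 0
      · have hz : (fun k : Fin n → ℕ =>
            (if ∀ l, j l ≤ k l + unitvec m l then
              (j m : ℝ) * b m (fun l => k l + unitvec m l - j l) else 0) * ∏ l, q l ^ k l)
            = fun _ => (0 : ℝ) := by
          funext k
          rw [hm]
          simp
        rw [hz]
        exact hasSum_zero
      · set p : Fin n → ℕ := fun l => j l - unitvec m l with hp
        have hpu : ∀ l, p l + unitvec m l = j l := by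
          intro l
          by_cases hl : l = m
          · subst hl
            simp [hp, unitvec, Nat.sub_add_cancel (Nat.one_le_iff_ne_zero.mpr hm)]
          · simp [hp, unitvec, hl]
        have h := Stmt4Aux.shift (fun r => (j m : ℝ) * b m r) ((hbsum m).mul_left _) q hq p
        have hgen : gen (fun r => (j m : ℝ) * b m r) q = 0 := by
          have h2 : gen (fun r => (j m : ℝ) * b m r) q = (j m : ℝ) * gen (b m) q := by
            unfold gen
            rw [← tsum_mul_left]
            congr 1
            funext r
            ring
          rw [h2, hqroot m, mul_zero]
        rw [hgen, zero_mul] at h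
        have heq : (fun k : Fin n → ℕ =>
            (if ∀ l, p l ≤ k l then (j m : ℝ) * b m (fun l => k l - p l) else 0)
              * ∏ l, q l ^ k l)
            = fun k : Fin n → ℕ =>
            (if ∀ l, j l ≤ k l + unitvec m l then
              (j m : ℝ) * b m (fun l => k l + unitvec m l - j l) else 0) * ∏ l, q l ^ k l := by
          funext k
          have hiff : (∀ l, j l ≤ k l + unitvec m l) ↔ (∀ l, p l ≤ k l) := by
            constructor
            · intro hc l
              have := hc l
              rw [← hpu l] at this
              exact Nat.le_of_add_le_add_right this
            · intro hc l
              rw [← hpu l]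
              exact Nat.add_le_add_right (hc l) _
          by_cases hcond : ∀ l, p l ≤ k l
          · rw [if_pos hcond, if_pos (hiff.mpr hcond)]
            have harg : (fun l => k l - p l) = fun l => k l + unitvec m l - j l := by
              funext l
              rw [← hpu l, Nat.add_sub_add_right]
            rw [harg]
          · rw [if_neg hcond, if_neg (fun hc => hcond (hiff.mp hc))]
        rw [heq] at h
        exact h
    have hbsumall : HasSum (fun k : Fin n → ℕ =>
        ∑ m : Fin n, (if ∀ l, j l ≤ k l + unitvec m l then
          (j m : ℝ) * b m (fun l => k l + unitvec m l - j l) else 0) * ∏ l, q l ^ k l)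
        (∑ _m : Fin n, (0 : ℝ)) :=
      hasSum_sum fun m _ => hb m
    have ha := Stmt4Aux.shift a hasum q hq j
    have htot := hbsumall.add ha
    rw [Finset.sum_const, smul_zero, zero_add] at htot
    have hfin : (fun k : Fin n → ℕ =>
        (∑ m : Fin n, (if ∀ l, j l ≤ k l + unitvec m l then
          (j m : ℝ) * b m (fun l => k l + unitvec m l - j l) else 0) * ∏ l, q l ^ k l)
        + (if ∀ l, j l ≤ k l then a (fun l => k l - j l) else 0) * ∏ l, q l ^ k l)
        = fun k : Fin n → ℕ => qmat a a b j k * ∏ l, q l ^ k l := by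
      funext k
      rw [qmat, if_neg hj, add_mul, Finset.sum_mul]
    rw [hfin] at htot
    exact htot
end

section
/- Suppose the system $B_1(u)=\cdots=B_n(u)=0$ has a solution $\mathbf{q}=(q_1,\dots,q_n)\in(0,1)^n$. Then the system of equations $\eta(\lambda I-Q)=0$ with $\lambda=1$, $\eta_{\mathbf{j}}\ge 0$, $\sum_{\mathbf{j}\in\mathbb{Z}_+^n}\eta_{\mathbf{j}}<\infty$, has only the trivial solution $\eta\equiv 0$, where $Q$ is the n-type branching with immigration q-matrix of (1.1)-(1.2). Consequently the Feller minimal $Q$-process is the unique $Q$-process satisfying the Kolmogorov forward equations. -/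
open Filter Topology Set

/-!
With `w j = q ^ j`, the identity `B_k(q) = 0` kills the branching part of every weighted row
sum `c i = ∑ j, Q i j * w j`, leaving `c 0 = H(q)` and `c i = q ^ i * A(q)`, both negative.
Since `i_k q_k ^ (i_k - 1) ≤ (1 - q_k)⁻¹`, the sums `∑ j, |Q i j| * w j` are bounded uniformly
in `i`, so `∑ i j, η i * Q i j * w j` converges absolutely. Summed over `i` first it is
`∑ j, η j * w j ≥ 0` (because `η Q = η`); summed over `j` first it is `∑ i, η i * c i ≤ 0`.
Hence every `η i * c i` vanishes, and `c i < 0` gives `η i = 0`.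
-/

theorem eq_zero_of_vecMul_eq_self_of_rowSum_neg {ι : Type*} {Q : ι → ι → ℝ} {w η c : ι → ℝ} {D : ℝ}
    (hw : ∀ j, 0 ≤ w j) (hη : ∀ j, 0 ≤ η j) (hηs : Summable η)
    (hηQ : ∀ j, HasSum (fun i => η i * Q i j) (η j))
    (hQw : ∀ i, HasSum (fun j => Q i j * w j) (c i)) (hc : ∀ i, c i < 0)
    (hQws : ∀ i, Summable fun j => |Q i j * w j|) (hD : ∀ i, ∑' j, |Q i j * w j| ≤ D) :
    η = 0 := by
  set F : ι × ι → ℝ := fun p => η p.1 * (Q p.1 p.2 * w p.2)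
  have habsF : ∀ i, (fun j => |F (i, j)|) = fun j => η i * |Q i j * w j| := fun i => by
    simp only [F, abs_mul, abs_of_nonneg (hη i)]
  have hF : Summable F := by
    refine summable_abs_iff.mp
      ((summable_prod_of_nonneg fun _ => abs_nonneg _).2 ⟨fun i => ?_, ?_⟩)
    · simpa only [habsF] using (hQws i).mul_left (η i)
    · refine (hηs.mul_right D).of_nonneg_of_le (fun i => tsum_nonneg fun _ => abs_nonneg _)
        fun i => ?_
      simp only [habsF, tsum_mul_left]
      exact mul_le_mul_of_nonneg_left (hD i) (hη i)
  obtain ⟨S, hFS⟩ := hF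
  have hrows : HasSum (fun i => η i * c i) S :=
    hFS.prod_fiberwise fun i => (hQw i).mul_left (η i)
  have hcols : HasSum (fun j => η j * w j) S := by
    refine ((Equiv.prodComm ι ι).hasSum_iff.mpr hFS).prod_fiberwise fun j => ?_
    simpa [F, mul_assoc] using (hηQ j).mul_right (w j)
  have hterm : ∀ i, 0 ≤ -(η i * c i) := fun i =>
    neg_nonneg.mpr (mul_nonpos_of_nonneg_of_nonpos (hη i) (hc i).le)
  have hS : S = 0 := le_antisymm (neg_nonneg.mp (hrows.neg.nonneg hterm))
    (hcols.nonneg fun j => mul_nonneg (hη j) (hw j))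
  have hvanish := (hasSum_zero_iff_of_nonneg hterm).1 (by simpa [hS] using hrows.neg)
  funext i
  simpa [(hc i).ne] using congrFun hvanish i

namespace BranchingImmigration

variable {n : ℕ} {q : Fin n → ℝ}

noncomputable def multiPow (q : Fin n → ℝ) (j : Fin n → ℕ) : ℝ := ∏ l, q l ^ j l

theorem multiPow_pos (hq : ∀ l, 0 < q l) (j : Fin n → ℕ) : 0 < multiPow q j :=
  Finset.prod_pos fun l _ => pow_pos (hq l) _

theorem multiPow_nonneg (hq0 : ∀ l, 0 ≤ q l) (j : Fin n → ℕ) : 0 ≤ multiPow q j :=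
  Finset.prod_nonneg fun l _ => pow_nonneg (hq0 l) _

theorem multiPow_le_pow_apply (hq0 : ∀ l, 0 ≤ q l) (hq1 : ∀ l, q l ≤ 1)
    (j : Fin n → ℕ) (k : Fin n) : multiPow q j ≤ q k ^ j k := by
  rw [multiPow, ← Finset.mul_prod_erase _ _ (Finset.mem_univ k)]
  exact mul_le_of_le_one_right (pow_nonneg (hq0 k) _)
    (Finset.prod_le_one (fun l _ => pow_nonneg (hq0 l) _) fun l _ => pow_le_one₀ (hq0 l) (hq1 l))

theorem multiPow_le_one (hq0 : ∀ l, 0 ≤ q l) (hq1 : ∀ l, q l ≤ 1) (j : Fin n → ℕ) :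
    multiPow q j ≤ 1 :=
  Finset.prod_le_one (fun l _ => pow_nonneg (hq0 l) _) fun l _ => pow_le_one₀ (hq0 l) (hq1 l)

theorem multiPow_lt_one (hq0 : ∀ l, 0 ≤ q l) (hq1 : ∀ l, q l < 1) {j : Fin n → ℕ}
    (hj : j ≠ 0) : multiPow q j < 1 := by
  obtain ⟨k, hk⟩ := Function.ne_iff.mp hj
  exact (multiPow_le_pow_apply hq0 (fun l => (hq1 l).le) j k).trans_lt
    (pow_lt_one₀ (hq0 k) (hq1 k) hk)

@[simp]
theorem multiPow_zero (q : Fin n → ℝ) : multiPow q 0 = 1 := by simp [multiPow]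

theorem multiPow_add (q : Fin n → ℝ) (i j : Fin n → ℕ) :
    multiPow q (i + j) = multiPow q i * multiPow q j := by
  simp [multiPow, pow_add, Finset.prod_mul_distrib]

theorem natCast_mul_pow_pred_le {x : ℝ} (h0 : 0 ≤ x) (h1 : x < 1) (k : ℕ) :
    k * x ^ (k - 1) ≤ (1 - x)⁻¹ := by
  have hgeom := hasSum_geometric_of_lt_one h0 h1
  calc (k : ℝ) * x ^ (k - 1) = ∑ _m ∈ Finset.range k, x ^ (k - 1) := by simp
    _ ≤ ∑ m ∈ Finset.range k, x ^ m := Finset.sum_le_sum fun m hm =>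
        pow_le_pow_of_le_one h0 h1.le (by have := Finset.mem_range.mp hm; omega)
    _ ≤ (1 - x)⁻¹ := hgeom.tsum_eq ▸
        hgeom.summable.sum_le_tsum _ fun m _ => pow_nonneg h0 m

theorem natCast_mul_multiPow_sub_unitvec_le (hq0 : ∀ l, 0 ≤ q l) (hq1 : ∀ l, q l < 1)
    (i : Fin n → ℕ) (k : Fin n) : i k * multiPow q (i - unitvec k) ≤ (1 - q k)⁻¹ := by
  have hle : multiPow q (i - unitvec k) ≤ q k ^ (i k - 1) := by
    simpa [unitvec] using multiPow_le_pow_apply hq0 (fun l => (hq1 l).le) (i - unitvec k) k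
  exact (mul_le_mul_of_nonneg_left hle (Nat.cast_nonneg _)).trans
    (natCast_mul_pow_pred_le (hq0 k) (hq1 k) (i k))

theorem summable_mul_multiPow (hq0 : ∀ l, 0 ≤ q l) (hq1 : ∀ l, q l ≤ 1)
    {f : (Fin n → ℕ) → ℝ} (hf : Summable f) : Summable fun m => f m * multiPow q m :=
  Summable.of_norm_bounded hf.abs fun m => by
    rw [Real.norm_eq_abs, abs_mul, abs_of_nonneg (multiPow_nonneg hq0 m)]
    exact mul_le_of_le_one_right (abs_nonneg _) (multiPow_le_one hq0 hq1 m)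

theorem hasSum_gen (hq0 : ∀ l, 0 ≤ q l) (hq1 : ∀ l, q l ≤ 1) {f : (Fin n → ℕ) → ℝ}
    (hf : Summable f) : HasSum (fun m => f m * multiPow q m) (gen f q) :=
  (summable_mul_multiPow hq0 hq1 hf).hasSum

theorem gen_neg (hq0 : ∀ l, 0 ≤ q l) (hq1 : ∀ l, q l < 1) {f : (Fin n → ℕ) → ℝ}
    (hf : ∀ j, j ≠ 0 → 0 ≤ f j) (hfs : Summable f)
    (hval : HasSum (fun j : {j : Fin n → ℕ // j ≠ 0} => f j.1) (-f 0)) (hpos : 0 < -f 0) :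
    gen f q < 0 := by
  have htot : HasSum f 0 := by
    have hcompl : HasSum (f ∘ Subtype.val : ({0}ᶜ : Set (Fin n → ℕ)) → ℝ) (-f 0) := hval
    simpa using (hasSum_singleton 0 f).add_compl hcompl
  obtain ⟨m, hm, hfm⟩ : ∃ m, m ≠ 0 ∧ 0 < f m := by
    by_contra! hle
    have hf0 := (hasSum_single 0 fun j hj => le_antisymm (hle j hj) (hf j hj)).unique htot
    linarith
  have hdefect : HasSum (fun j => f j * (1 - multiPow q j)) (0 - gen f q) := by
    simpa [mul_sub] using htot.sub (hasSum_gen hq0 (fun l => (hq1 l).le) hfs)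
  have hdefect_nonneg : ∀ j, 0 ≤ f j * (1 - multiPow q j) := fun j => by
    by_cases hj : j = 0
    · simp [hj]
    · exact mul_nonneg (hf j hj) (sub_nonneg.mpr (multiPow_lt_one hq0 hq1 hj).le)
  have : (0 : ℝ) < 0 - gen f q :=
    hasSum_lt (f := fun _ => 0) (i := m) hdefect_nonneg
      (mul_pos hfm (sub_pos.mpr (multiPow_lt_one hq0 hq1 hm))) hasSum_zero hdefect
  linarith

theorem hasSum_shift_mul_multiPow {c : (Fin n → ℕ) → ℝ} {t : ℝ}
    (hc : HasSum (fun m => c m * multiPow q m) t) (d : Fin n → ℕ) :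
    HasSum (fun j => (if ∀ l, d l ≤ j l then c (fun l => j l - d l) else 0) * multiPow q j)
      (multiPow q d * t) := by
  have hvanish : ∀ j ∉ Set.range (· + d),
      (if ∀ l, d l ≤ j l then c (fun l => j l - d l) else 0) * multiPow q j = 0 := by
    intro j hj
    rw [if_neg, zero_mul]
    exact fun hdj => hj ⟨j - d, funext fun l => Nat.sub_add_cancel (hdj l)⟩
  refine ((add_left_injective d).hasSum_iff hvanish).mp ?_
  have hshift : ∀ m : Fin n → ℕ, (fun l => (m + d) l - d l) = m := fun m => by simp
  simpa [Function.comp_def, hshift, multiPow_add, mul_comm, mul_left_comm] using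
    hc.mul_left (multiPow q d)

theorem hasSum_branchTerm_mul_multiPow {c : (Fin n → ℕ) → ℝ} {t : ℝ}
    (hc : HasSum (fun m => c m * multiPow q m) t) (i : Fin n → ℕ) (k : Fin n) :
    HasSum (fun j => (if ∀ l, i l ≤ j l + unitvec k l then
        (i k : ℝ) * c (fun l => j l + unitvec k l - i l) else 0) * multiPow q j)
      (i k * multiPow q (i - unitvec k) * t) := by
  by_cases hik : i k = 0
  · simp [hik]
  have hunit_le : ∀ l, unitvec k l ≤ i l := fun l => by
    rw [unitvec]
    split_ifs with hlk
    exacts [hlk ▸ Nat.one_le_iff_ne_zero.mpr hik, Nat.zero_le _]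
  have hcond : ∀ j : Fin n → ℕ,
      (∀ l, i l ≤ j l + unitvec k l) ↔ ∀ l, (i - unitvec k) l ≤ j l := fun j =>
    forall_congr' fun l => by
      have := hunit_le l; simp only [Pi.sub_apply]; omega
  have harg : ∀ j : Fin n → ℕ,
      (fun l => j l + unitvec k l - i l) = fun l => j l - (i - unitvec k) l := fun j =>
    funext fun l => by
      have := hunit_le l; simp only [Pi.sub_apply]; omega
  have hck : HasSum (fun m => (i k * c m) * multiPow q m) (i k * t) := by
    simpa only [mul_assoc] using hc.mul_left (i k : ℝ)
  rw [mul_comm (i k : ℝ), mul_assoc]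
  simpa only [hcond, harg] using hasSum_shift_mul_multiPow hck (i - unitvec k)

theorem hasSum_qmat_mul_multiPow (hq0 : ∀ l, 0 ≤ q l) (hq1 : ∀ l, q l ≤ 1)
    {h a : (Fin n → ℕ) → ℝ} {b : Fin n → (Fin n → ℕ) → ℝ}
    (hh : Summable h) (ha : Summable a) (hb : ∀ k, Summable (b k)) (i : Fin n → ℕ) :
    HasSum (fun j => qmat h a b i j * multiPow q j)
      (if i = 0 then gen h q
        else ∑ k, i k * multiPow q (i - unitvec k) * gen (b k) q + multiPow q i * gen a q) := by
  by_cases hi : i = 0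
  · simpa [qmat, hi] using hasSum_gen hq0 hq1 hh
  simp only [qmat, hi, if_false, add_mul, Finset.sum_mul]
  exact (hasSum_sum fun k _ => hasSum_branchTerm_mul_multiPow (hasSum_gen hq0 hq1 (hb k)) i k).add
    (hasSum_shift_mul_multiPow (hasSum_gen hq0 hq1 ha) i)

theorem abs_qmat_le (h a : (Fin n → ℕ) → ℝ) (b : Fin n → (Fin n → ℕ) → ℝ) (i j : Fin n → ℕ) :
    |qmat h a b i j| ≤ qmat (|h ·|) (|a ·|) (fun k m => |b k m|) i j := by
  unfold qmat
  by_cases hi : i = 0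
  · simp [hi]
  rw [if_neg hi, if_neg hi]
  refine (abs_add_le _ _).trans (add_le_add ((Finset.abs_sum_le_sum_abs _ _).trans
    (Finset.sum_le_sum fun k _ => ?_)) ?_)
  · split_ifs <;> simp [abs_mul]
  · split_ifs <;> simp

theorem summable_abs_qmat_mul_multiPow_and_tsum_le (hq0 : ∀ l, 0 ≤ q l) (hq1 : ∀ l, q l < 1)
    {h a : (Fin n → ℕ) → ℝ} {b : Fin n → (Fin n → ℕ) → ℝ}
    (hh : Summable h) (ha : Summable a) (hb : ∀ k, Summable (b k)) (i : Fin n → ℕ) :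
    (Summable fun j => |qmat h a b i j * multiPow q j|) ∧
      ∑' j, |qmat h a b i j * multiPow q j| ≤
        gen (|h ·|) q + gen (|a ·|) q + ∑ k, (1 - q k)⁻¹ * gen (|b k ·|) q := by
  have hq1' : ∀ l, q l ≤ 1 := fun l => (hq1 l).le
  have hgen_nonneg : ∀ f : (Fin n → ℕ) → ℝ, 0 ≤ gen (|f ·|) q := fun f =>
    tsum_nonneg fun m => mul_nonneg (abs_nonneg _) (multiPow_nonneg hq0 m)
  have hmajor := hasSum_qmat_mul_multiPow hq0 hq1' hh.abs ha.abs (fun k => (hb k).abs) i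
  have hle : ∀ j, |qmat h a b i j * multiPow q j|
      ≤ qmat (|h ·|) (|a ·|) (fun k m => |b k m|) i j * multiPow q j := fun j => by
    rw [abs_mul, abs_of_nonneg (multiPow_nonneg hq0 j)]
    exact mul_le_mul_of_nonneg_right (abs_qmat_le h a b i j) (multiPow_nonneg hq0 j)
  have hsummable := hmajor.summable.of_nonneg_of_le (fun _ => abs_nonneg _) hle
  refine ⟨hsummable, (hsummable.tsum_le_tsum hle hmajor.summable).trans ?_⟩
  rw [hmajor.tsum_eq]
  have hbranch : ∑ k, i k * multiPow q (i - unitvec k) * gen (|b k ·|) q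
      ≤ ∑ k, (1 - q k)⁻¹ * gen (|b k ·|) q := Finset.sum_le_sum fun k _ =>
    mul_le_mul_of_nonneg_right (natCast_mul_multiPow_sub_unitvec_le hq0 hq1 i k)
      (hgen_nonneg _)
  have himm : multiPow q i * gen (|a ·|) q ≤ gen (|a ·|) q :=
    mul_le_of_le_one_left (hgen_nonneg a) (multiPow_le_one hq0 hq1' i)
  have htail : 0 ≤ ∑ k, (1 - q k)⁻¹ * gen (|b k ·|) q := Finset.sum_nonneg fun k _ =>
    mul_nonneg (inv_nonneg.mpr (sub_nonneg.mpr (hq1' k))) (hgen_nonneg _)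
  split_ifs <;> linarith [hgen_nonneg h, hgen_nonneg a]

end BranchingImmigration

open BranchingImmigration

theorem stmt_5_general {n : ℕ} (h a : (Fin n → ℕ) → ℝ) (b : Fin n → (Fin n → ℕ) → ℝ)
    (hhnn : ∀ j : Fin n → ℕ, j ≠ 0 → 0 ≤ h j)
    (hhsum : Summable h)
    (hhval : HasSum (fun j : {j : Fin n → ℕ // j ≠ 0} => h j.1) (-h 0))
    (hhpos : 0 < -h 0)
    (hann : ∀ j : Fin n → ℕ, j ≠ 0 → 0 ≤ a j)
    (hasum : Summable a)
    (haval : HasSum (fun j : {j : Fin n → ℕ // j ≠ 0} => a j.1) (-a 0))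
    (hapos : 0 < -a 0)
    (hbsum : ∀ i, Summable (b i))
    (q : Fin n → ℝ) (hq : ∀ l, q l ∈ Ioo (0:ℝ) 1)
    (hqroot : ∀ i, gen (b i) q = 0)
    (η : (Fin n → ℕ) → ℝ)
    (hηnn : ∀ j, 0 ≤ η j)
    (hηsum : Summable η)
    (hηeq : ∀ j, HasSum (fun i : Fin n → ℕ => η i * qmat h a b i j) (η j)) :
    ∀ j, η j = 0 := by
  have hq0 : ∀ l, 0 ≤ q l := fun l => (hq l).1.le
  have hq1 : ∀ l, q l < 1 := fun l => (hq l).2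
  have hrow : ∀ i, HasSum (fun j => qmat h a b i j * multiPow q j)
      (if i = 0 then gen h q else multiPow q i * gen a q) := fun i => by
    simpa [hqroot] using
      hasSum_qmat_mul_multiPow hq0 (fun l => (hq1 l).le) hhsum hasum hbsum i
  have hrow_neg : ∀ i, (if i = 0 then gen h q else multiPow q i * gen a q) < 0 := fun i => by
    split_ifs
    · exact gen_neg hq0 hq1 hhnn hhsum hhval hhpos
    · exact mul_neg_of_pos_of_neg (multiPow_pos (fun l => (hq l).1) i)
        (gen_neg hq0 hq1 hann hasum haval hapos)
  have hrow_abs := summable_abs_qmat_mul_multiPow_and_tsum_le hq0 hq1 hhsum hasum hbsum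
  exact congrFun (eq_zero_of_vecMul_eq_self_of_rowSum_neg (multiPow_nonneg hq0) hηnn hηsum
    hηeq hrow hrow_neg (fun i => (hrow_abs i).1) fun i => (hrow_abs i).2)

/-- if `B_1 = ⋯ = B_n = 0` has a solution `q ∈ (0,1)^n`, then the
system `η(I - Q) = 0` (λ = 1) with `η ≥ 0` summable has only the trivial
solution `η ≡ 0`, for the n-type branching with immigration q-matrix `Q` of
(1.1)-(1.2). -/
theorem stmt_5 {n : ℕ} (h a : (Fin n → ℕ) → ℝ) (b : Fin n → (Fin n → ℕ) → ℝ)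
    (hhnn : ∀ j : Fin n → ℕ, j ≠ 0 → 0 ≤ h j)
    (hhsum : Summable h)
    (hhval : HasSum (fun j : {j : Fin n → ℕ // j ≠ 0} => h j.1) (-h 0))
    (hhpos : 0 < -h 0)
    (hann : ∀ j : Fin n → ℕ, j ≠ 0 → 0 ≤ a j)
    (hasum : Summable a)
    (haval : HasSum (fun j : {j : Fin n → ℕ // j ≠ 0} => a j.1) (-a 0))
    (hapos : 0 < -a 0)
    (hbnn : ∀ i j, j ≠ unitvec i → 0 ≤ b i j)
    (hbsum : ∀ i, Summable (b i))
    (hbval : ∀ i, HasSum (fun j : {j : Fin n → ℕ // j ≠ unitvec i} => b i j.1)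
      (-(b i (unitvec i))))
    (hbpos : ∀ i, 0 < -(b i (unitvec i)))
    (q : Fin n → ℝ) (hq : ∀ l, q l ∈ Ioo (0:ℝ) 1)
    (hqroot : ∀ i, gen (b i) q = 0)
    (η : (Fin n → ℕ) → ℝ)
    (hηnn : ∀ j, 0 ≤ η j)
    (hηsum : Summable η)
    (hηeq : ∀ j, HasSum (fun i : Fin n → ℕ => η i * qmat h a b i j) (η j)) :
    ∀ j, η j = 0 :=
  stmt_5_general h a b hhnn hhsum hhval hhpos hann hasum haval hapos hbsum q hq hqroot η hηnn hηsum
    hηeq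
end

section
/- (Transience certificate, supercritical case) Suppose $0<\rho(1,\dots,1)\le+\infty$, so the system $B_1=\cdots=B_n=0$ has a root $\mathbf{q}=(q_1,\dots,q_n)\in(0,1)^n$. Let $\pi_{\mathbf{ij}}=q_{\mathbf{ij}}/(-q_{\mathbf{ii}})$ for $\mathbf{i}\ne\mathbf{0}$, $\mathbf{j}\ne\mathbf{i}$, be the jump chain probabilities, where $-q_{\mathbf{ii}}=-\sum_{k}i_k b^{(k)}_{\mathbf{e}_k}-a_{\mathbf{0}}$. Then $x_{\mathbf{i}}=1-\mathbf{q}^{\mathbf{i}}=1-q_1^{i_1}\cdots q_n^{i_n}$ is a non-constant bounded solution of the inequality $\sum_{\mathbf{j}} \pi_{\mathbf{ij}} x_{\mathbf{j}} \ge x_{\mathbf{i}}$ for all $\mathbf{i}\ne\mathbf{0}$; indeed $\sum_{\mathbf{j}}\pi_{\mathbf{ij}}x_{\mathbf{j}} = x_{\mathbf{i}} + \frac{-\mathbf{q}^{\mathbf{i}}A(\mathbf{q})}{-\sum_k i_k b^{(k)}_{\mathbf{e}_k}-a_{\mathbf{0}}} \ge x_{\mathbf{i}}$ since $A(\mathbf{q})\le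 0$. -/
open Filter Topology Set MeasureTheory

def IsTransFun {n : ℕ} (p : (Fin n → ℕ) → (Fin n → ℕ) → ℝ → ℝ) : Prop :=
  (∀ i j t, 0 ≤ t → 0 ≤ p i j t) ∧
  (∀ i t, 0 ≤ t → ∀ S : Finset (Fin n → ℕ), ∑ j ∈ S, p i j t ≤ 1) ∧
  (∀ i j, p i j 0 = if i = j then (1:ℝ) else 0)

def SatisfiesForward {n : ℕ} (Q : (Fin n → ℕ) → (Fin n → ℕ) → ℝ)
    (p : (Fin n → ℕ) → (Fin n → ℕ) → ℝ → ℝ) : Prop :=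
  ∀ i j t, 0 ≤ t → HasDerivAt (fun s => p i j s) (∑' k, p i k t * Q k j) t

def IsMinimalQFun {n : ℕ} (Q : (Fin n → ℕ) → (Fin n → ℕ) → ℝ)
    (p : (Fin n → ℕ) → (Fin n → ℕ) → ℝ → ℝ) : Prop :=
  IsTransFun p ∧ SatisfiesForward Q p ∧
  ∀ p', IsTransFun p' → SatisfiesForward Q p' → ∀ i j t, 0 ≤ t → p i j t ≤ p' i j t

/-! Write `x_j = 1 - q^j`. Every row of `Q` sums to zero, and the generating-function identity
`∑_j q_{ij} u^j = ∑_k i_k u^{i - e_k} B_k(u) + u^i A(u)` (for `i ≠ 0`), evaluated at `u = q` where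
all `B_k` vanish, gives `∑_j q_{ij} x_j = -q^i A(q)`. Dividing by the total rate `D_i = -q_{ii} > 0`
and moving the diagonal term across yields the jump-chain identity. Finally
`A(q) = ∑_j a_j (q^j - 1) ≤ 0`, because `∑_j a_j = 0`, `a_j ≥ 0` for `j ≠ 0` and `q^j ≤ 1`. -/

lemma hasSum_zero_of_hasSum_ne {β α : Type*} [AddCommGroup α] [TopologicalSpace α]
    [IsTopologicalAddGroup α] {f : β → α} {j₀ : β}
    (h : HasSum (fun j : {j : β // j ≠ j₀} => f j) (-f j₀)) : HasSum f 0 := by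
  simpa using (hasSum_singleton j₀ f).add_compl h

section Shift

variable {ι α : Type*} [AddCommMonoid α]

open Classical in
noncomputable def shiftBy (i : ι → ℕ) (c : (ι → ℕ) → α) (j : ι → ℕ) : α :=
  if i ≤ j then c (j - i) else 0

lemma shiftBy_add (i m : ι → ℕ) (c : (ι → ℕ) → α) : shiftBy i c (i + m) = c m := by
  rw [shiftBy, if_pos le_self_add, add_tsub_cancel_left]

lemma hasSum_shiftBy [TopologicalSpace α] (i : ι → ℕ) {c : (ι → ℕ) → α} {s : α}
    (hc : HasSum c s) :
    HasSum (shiftBy i c) s := by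
  have hinj : Function.Injective (i + ·) := add_right_injective i
  refine (hinj.hasSum_iff fun j hj => ?_).mp ?_
  · rw [shiftBy, if_neg fun hij => hj ⟨j - i, add_tsub_cancel_of_le hij⟩]
  · simpa [Function.comp_def, shiftBy_add] using hc

end Shift

section MultiPow

variable {ι : Type*} [Fintype ι]

def multiPow (u : ι → ℝ) (j : ι → ℕ) : ℝ := ∏ l, u l ^ j l

lemma multiPow_add (u : ι → ℝ) (i j : ι → ℕ) :
    multiPow u (i + j) = multiPow u i * multiPow u j := by
  simp only [multiPow, Pi.add_apply, pow_add, Finset.prod_mul_distrib]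

@[simp] lemma multiPow_zero (u : ι → ℝ) : multiPow u 0 = 1 := by simp [multiPow]

@[simp] lemma one_multiPow (j : ι → ℕ) : multiPow 1 j = 1 := by simp [multiPow]

lemma multiPow_nonneg {u : ι → ℝ} (hu : ∀ l, u l ∈ Icc (0 : ℝ) 1) (j : ι → ℕ) :
    0 ≤ multiPow u j :=
  Finset.prod_nonneg fun l _ => pow_nonneg (hu l).1 _

lemma multiPow_le_one {u : ι → ℝ} (hu : ∀ l, u l ∈ Icc (0 : ℝ) 1) (j : ι → ℕ) :
    multiPow u j ≤ 1 :=
  Finset.prod_le_one (fun l _ => pow_nonneg (hu l).1 _) fun l _ => pow_le_one₀ (hu l).1 (hu l).2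

lemma summable_mul_multiPow {c : (ι → ℕ) → ℝ} (hc : Summable c) {u : ι → ℝ}
    (hu : ∀ l, u l ∈ Icc (0 : ℝ) 1) : Summable fun j => c j * multiPow u j :=
  hc.abs.of_norm_bounded fun j => by
    rw [norm_mul, Real.norm_eq_abs, Real.norm_of_nonneg (multiPow_nonneg hu j)]
    exact mul_le_of_le_one_right (abs_nonneg _) (multiPow_le_one hu j)

lemma hasSum_shiftBy_mul_multiPow (i : ι → ℕ) {c : (ι → ℕ) → ℝ} {u : ι → ℝ} {s : ℝ}
    (hc : HasSum (fun j => c j * multiPow u j) s) :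
    HasSum (fun j => shiftBy i c j * multiPow u j) (multiPow u i * s) := by
  suffices (fun j => shiftBy i c j * multiPow u j) =
      shiftBy i (fun m => multiPow u i * (c m * multiPow u m)) from
    this ▸ hasSum_shiftBy i (hc.mul_left (multiPow u i))
  funext j
  unfold shiftBy
  split_ifs with hij
  · have : multiPow u j = multiPow u i * multiPow u (j - i) := by
      rw [← multiPow_add, add_tsub_cancel_of_le hij]
    rw [this]
    ring
  · simp

end MultiPow

section GeneratingFunction

variable {n : ℕ}

lemma hasSum_gen {c : (Fin n → ℕ) → ℝ} (hc : Summable c) {u : Fin n → ℝ}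
    (hu : ∀ l, u l ∈ Icc (0 : ℝ) 1) : HasSum (fun j => c j * multiPow u j) (gen c u) :=
  (summable_mul_multiPow hc hu).hasSum

lemma multiPow_unitvec (u : Fin n → ℝ) (k : Fin n) : multiPow u (unitvec k) = u k := by
  simp [multiPow, unitvec, pow_ite]

lemma gen_nonpos {a : (Fin n → ℕ) → ℝ} (ha : ∀ j, j ≠ 0 → 0 ≤ a j) (ha0 : HasSum a 0)
    {u : Fin n → ℝ} (hu : ∀ l, u l ∈ Icc (0 : ℝ) 1) : gen a u ≤ 0 := by
  have h := (hasSum_gen ha0.summable hu).sub ha0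
  rw [sub_zero] at h
  refine hasSum_le (fun j => ?_) h hasSum_zero
  rcases eq_or_ne j 0 with rfl | hj
  · simp
  · exact sub_nonpos.mpr (mul_le_of_le_one_right (ha j hj) (multiPow_le_one hu j))

end GeneratingFunction

section QMatrix

variable {n : ℕ} (h a : (Fin n → ℕ) → ℝ) (b : Fin n → (Fin n → ℕ) → ℝ)

lemma qmat_branch_eq (i j : Fin n → ℕ) (k : Fin n) (c : (Fin n → ℕ) → ℝ) :
    (if ∀ l, i l ≤ j l + unitvec k l then (i k : ℝ) * c (fun l => j l + unitvec k l - i l)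
      else 0) = (i k : ℝ) * shiftBy (i - unitvec k) c j := by
  rcases Nat.eq_zero_or_pos (i k) with hik | hik
  · simp [hik]
  have hle : (∀ l, i l ≤ j l + unitvec k l) ↔ i - unitvec k ≤ j :=
    forall_congr' fun l => Nat.sub_le_iff_le_add.symm
  by_cases hij : i - unitvec k ≤ j
  · rw [if_pos (hle.mpr hij), shiftBy, if_pos hij]
    congr 2
    funext l
    have := hij l
    simp only [Pi.sub_apply, unitvec] at this ⊢
    split_ifs at this ⊢ with hl <;> [subst hl; skip] <;> omega
  · rw [if_neg (mt hle.mp hij), shiftBy, if_neg hij, mul_zero]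

lemma qmat_eq_of_ne_zero {i : Fin n → ℕ} (hi : i ≠ 0) (j : Fin n → ℕ) :
    qmat h a b i j = ∑ k, (i k : ℝ) * shiftBy (i - unitvec k) (b k) j + shiftBy i a j := by
  classical
  simp only [qmat, if_neg hi, qmat_branch_eq, shiftBy]
  exact congrArg _ (if_congr Iff.rfl rfl rfl)

lemma qmat_self {i : Fin n → ℕ} (hi : i ≠ 0) :
    qmat h a b i i = ∑ k, (i k : ℝ) * b k (unitvec k) + a 0 := by
  simp only [qmat, if_neg hi, le_add_iff_nonneg_right, zero_le, implies_true, ↓reduceIte,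
    add_tsub_cancel_left, le_refl, tsub_self, add_right_inj]
  rfl

lemma hasSum_qmat_mul_multiPow {i : Fin n → ℕ} (hi : i ≠ 0) {u : Fin n → ℝ} {A : ℝ}
    {B : Fin n → ℝ} (hA : HasSum (fun j => a j * multiPow u j) A)
    (hB : ∀ k, HasSum (fun j => b k j * multiPow u j) (B k)) :
    HasSum (fun j => qmat h a b i j * multiPow u j)
      (∑ k, (i k : ℝ) * (multiPow u (i - unitvec k) * B k) + multiPow u i * A) := by
  simp only [qmat_eq_of_ne_zero h a b hi, add_mul, Finset.sum_mul, mul_assoc]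
  exact (hasSum_sum fun k _ => (hasSum_shiftBy_mul_multiPow _ (hB k)).mul_left _).add
    (hasSum_shiftBy_mul_multiPow i hA)

lemma hasSum_qmat_mul_one_sub_multiPow {i : Fin n → ℕ} (hi : i ≠ 0) (ha : HasSum a 0)
    (hb : ∀ k, HasSum (b k) 0) {q : Fin n → ℝ} (hq : ∀ l, q l ∈ Icc (0 : ℝ) 1)
    (hroot : ∀ k, gen (b k) q = 0) :
    HasSum (fun j => qmat h a b i j * (1 - multiPow q j)) (-multiPow q i * gen a q) := by
  have hrow₁ := hasSum_qmat_mul_multiPow h a b hi (u := 1) (A := 0) (B := 0)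
    (by simpa using ha) fun k => by simpa using hb k
  have hrow_q := hasSum_qmat_mul_multiPow h a b hi (hasSum_gen ha.summable hq)
    fun k => hroot k ▸ hasSum_gen (hb k).summable hq
  simpa [mul_one_sub] using hrow₁.sub hrow_q

end QMatrix

lemma hasSum_jumpChain_mul {β : Type*} {Q π x : β → ℝ} {i : β} {D s : ℝ} (hD : D ≠ 0)
    (hQ : Q i = -D) (hπ : ∀ j, j ≠ i → π j = Q j / D) (hπi : π i = 0)
    (hs : HasSum (fun j => Q j * x j) s) : HasSum (fun j => π j * x j) (x i + s / D) := by
  classical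
  have hfun : (fun j => π j * x j) = Function.update (fun j => Q j * x j / D) i 0 := by
    funext j
    rcases eq_or_ne j i with rfl | hj
    · simp [hπi]
    · rw [Function.update_of_ne hj, hπ j hj]
      ring
  have hval : x i + s / D = 0 - Q i * x i / D + s / D := by
    rw [hQ]
    field_simp
    ring
  rw [hfun, hval]
  exact (hs.div_const D).update i 0

theorem stmt_9_general {n : ℕ} (hn : 0 < n) (a : (Fin n → ℕ) → ℝ)
    (b : Fin n → (Fin n → ℕ) → ℝ)
    (hann : ∀ j : Fin n → ℕ, j ≠ 0 → 0 ≤ a j)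
    (haval : HasSum (fun j : {j : Fin n → ℕ // j ≠ 0} => a j.1) (-a 0))
    (hapos : 0 < -a 0)
    (hbval : ∀ i, HasSum (fun j : {j : Fin n → ℕ // j ≠ unitvec i} => b i j.1)
      (-(b i (unitvec i))))
    (hbpos : ∀ i, 0 < -(b i (unitvec i)))
    -- supercritical root `q ∈ (0,1)^n`
    (q : Fin n → ℝ) (hq : ∀ l, q l ∈ Ioo (0:ℝ) 1)
    (hqroot : ∀ k, gen (b k) q = 0)
    -- total jump rates `D_i = -∑_k i_k b^{(k)}_{e_k} - a_0` and jump chain `π`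
    (D : (Fin n → ℕ) → ℝ)
    (hD : ∀ i : Fin n → ℕ, D i = -(∑ k, (i k : ℝ) * b k (unitvec k)) - a 0)
    (π : (Fin n → ℕ) → (Fin n → ℕ) → ℝ)
    (hπ : ∀ i j : Fin n → ℕ, i ≠ 0 → j ≠ i → π i j = qmat a a b i j / D i)
    (hπd : ∀ i : Fin n → ℕ, i ≠ 0 → π i i = 0)
    (x : (Fin n → ℕ) → ℝ)
    (hx : ∀ i : Fin n → ℕ, x i = 1 - ∏ l, q l ^ i l) :
    (∀ i, x i ∈ Icc (0:ℝ) 1) ∧ (∃ i j, x i ≠ x j) ∧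
    ∀ i : Fin n → ℕ, i ≠ 0 →
      HasSum (fun j : Fin n → ℕ => π i j * x j)
        (x i + (-(∏ l, q l ^ i l) * gen a q) / D i) ∧
      x i ≤ x i + (-(∏ l, q l ^ i l) * gen a q) / D i := by
  have hq01 : ∀ l, q l ∈ Icc (0 : ℝ) 1 := fun l => Ioo_subset_Icc_self (hq l)
  have ha0 : HasSum a 0 := hasSum_zero_of_hasSum_ne haval
  have hb0 : ∀ k, HasSum (b k) 0 := fun k => hasSum_zero_of_hasSum_ne (hbval k)
  obtain rfl : x = fun i => 1 - multiPow q i := funext hx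
  refine ⟨fun i => ⟨sub_nonneg.mpr (multiPow_le_one hq01 i),
    sub_le_self _ (multiPow_nonneg hq01 i)⟩, ⟨unitvec ⟨0, hn⟩, 0, ?_⟩, fun i hi => ?_⟩
  · simpa [multiPow_unitvec, sub_eq_zero] using (hq ⟨0, hn⟩).2.ne'
  have hDpos : 0 < D i := by
    have : ∑ k, (i k : ℝ) * b k (unitvec k) ≤ 0 := Finset.sum_nonpos fun k _ =>
      mul_nonpos_of_nonneg_of_nonpos (Nat.cast_nonneg _) (neg_pos.mp (hbpos k)).le
    linarith [hD i]
  refine ⟨hasSum_jumpChain_mul hDpos.ne' (by rw [qmat_self a a b hi, hD]; ring)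
    (fun j hj => hπ i j hi hj) (hπd i hi)
    (hasSum_qmat_mul_one_sub_multiPow a a b hi ha0 hb0 hq01 hqroot), ?_⟩
  exact le_add_of_nonneg_right (div_nonneg (mul_nonneg_of_nonpos_of_nonpos
    (neg_nonpos.mpr (multiPow_nonneg hq01 i)) (gen_nonpos hann ha0 hq01)) hDpos.le)

/-- transience certificate, supercritical case: if
`B_1 = ⋯ = B_n = 0` has a root `q ∈ (0,1)^n`, then
`x_i = 1 - q^i` is a non-constant bounded solution of
`∑_j π_{ij} x_j ≥ x_i` (`i ≠ 0`) for the jump chain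
`π_{ij} = q_{ij}/(-q_{ii})`; indeed the sum equals
`x_i + (-q^i A(q))/(-∑_k i_k b^{(k)}_{e_k} - a_0) ≥ x_i`. -/
theorem stmt_9 {n : ℕ} (hn : 0 < n) (a : (Fin n → ℕ) → ℝ)
    (b : Fin n → (Fin n → ℕ) → ℝ)
    (hann : ∀ j : Fin n → ℕ, j ≠ 0 → 0 ≤ a j)
    (hasum : Summable a)
    (haval : HasSum (fun j : {j : Fin n → ℕ // j ≠ 0} => a j.1) (-a 0))
    (hapos : 0 < -a 0)
    (hbnn : ∀ i j, j ≠ unitvec i → 0 ≤ b i j)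
    (hbsum : ∀ i, Summable (b i))
    (hbval : ∀ i, HasSum (fun j : {j : Fin n → ℕ // j ≠ unitvec i} => b i j.1)
      (-(b i (unitvec i))))
    (hbpos : ∀ i, 0 < -(b i (unitvec i)))
    -- supercritical root `q ∈ (0,1)^n`
    (q : Fin n → ℝ) (hq : ∀ l, q l ∈ Ioo (0:ℝ) 1)
    (hqroot : ∀ k, gen (b k) q = 0)
    -- total jump rates `D_i = -∑_k i_k b^{(k)}_{e_k} - a_0` and jump chain `π`
    (D : (Fin n → ℕ) → ℝ)
    (hD : ∀ i : Fin n → ℕ, D i = -(∑ k, (i k : ℝ) * b k (unitvec k)) - a 0)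
    (π : (Fin n → ℕ) → (Fin n → ℕ) → ℝ)
    (hπ : ∀ i j : Fin n → ℕ, i ≠ 0 → j ≠ i → π i j = qmat a a b i j / D i)
    (hπd : ∀ i : Fin n → ℕ, i ≠ 0 → π i i = 0)
    (x : (Fin n → ℕ) → ℝ)
    (hx : ∀ i : Fin n → ℕ, x i = 1 - ∏ l, q l ^ i l) :
    (∀ i, x i ∈ Icc (0:ℝ) 1) ∧ (∃ i j, x i ≠ x j) ∧
    ∀ i : Fin n → ℕ, i ≠ 0 →
      HasSum (fun j : Fin n → ℕ => π i j * x j)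
        (x i + (-(∏ l, q l ^ i l) * gen a q) / D i) ∧
      x i ≤ x i + (-(∏ l, q l ^ i l) * gen a q) / D i :=
  stmt_9_general hn a b hann haval hapos hbval hbpos q hq hqroot D hD π hπ hπd x hx
end

section
/- (Lyapunov drift for exponential ergodicity) Suppose $\rho:=\rho(1,\dots,1)<0$ is the maximal eigenvalue of the matrix $B(1,\dots,1)=(B_{kl}(1,\dots,1))$ with positive left-eigen structure, i.e. there is a vector $(x_1,\dots,x_n)>0$ with $\sum_{l=1}^n B_{kl}(1,\dots,1)x_l = \rho\, x_k$ for each $k$, and suppose $\sum_{j=1}^n [A_j(1,\dots,1)+H_j(1,\dots,1)]<\infty$. Define $f_{\mathbf{i}}=\sum_{k=1}^n i_k x_k$, $C_2=-\rho>0$, and $C_1=\big(\sum_j A_j(1,\dots,1)\vee \sum_j H_j(1,\dots,1)\big)\max_k x_k$. Then for every $\mathbf{i}\in\mathbb{Z}_+^n$: $\sum_{\mathbf{j}\in\mathbb{Z}_+^n} q_{\mathbf{ij}}(f_{\mathbf{j}}-f_{\mathbf{i}}) \le C_1 - C_2 f_{\mathbf{i}}$. -/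
/-!
Since `f` is linear, the drift splits over the three kinds of transitions. Shifting the summation
index turns the immigration part into `∑ₗ Aₗ xₗ` and the branching part of each of the `iₖ`
type-`k` particles into `∑ₗ Bₖₗ xₗ - xₖ ∑ⱼ bₖ(j)`, where the last sum vanishes because the rates of
`bₖ` are conservative; the eigenvector equation turns these into `ρ f_i`. At the empty state only
resurrection acts and contributes `∑ₗ Hₗ xₗ`. Both constants are at most `C₁` because the moments
are nonnegative and `x ≤ max x`.
-/

open Filter Topology Set MeasureTheory

lemma HasSum.zero_of_compl_singleton {α β : Type*} [AddCommGroup α] [TopologicalSpace α]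
    [IsTopologicalAddGroup α] {g : β → α} {b : β}
    (hg : HasSum (fun j : {j // j ≠ b} => g j) (-g b)) : HasSum g 0 := by
  simpa using (hasSum_singleton b g).hasSum_compl_iff.mp hg

lemma hasSum_ite_le_tsub_iff {α M : Type*} [AddCommMonoid α] [PartialOrder α]
    [CanonicallyOrderedAdd α] [Sub α] [OrderedSub α] [AddLeftReflectLE α]
    [AddCommMonoid M] [TopologicalSpace M] (s : α) [DecidablePred (s ≤ ·)] {F : α → M} {V : M} :
    HasSum (fun j => if s ≤ j then F (j - s) else 0) V ↔ HasSum F V := by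
  rw [← (add_right_injective s).hasSum_iff]
  · simp [Function.comp_def, add_tsub_cancel_left]
  · intro j hj
    rw [if_neg]
    intro hsj
    exact hj ⟨j - s, add_tsub_cancel_of_le hsj⟩

def linearForm {n : ℕ} (x : Fin n → ℝ) (i : Fin n → ℕ) : ℝ := ∑ k, (i k : ℝ) * x k

section LinearForm

variable {n : ℕ} (x : Fin n → ℝ)

@[simp] lemma linearForm_zero : linearForm x 0 = 0 := by simp [linearForm]

lemma linearForm_add (i j : Fin n → ℕ) :
    linearForm x (i + j) = linearForm x i + linearForm x j := by
  simp only [linearForm, Pi.add_apply, Nat.cast_add, add_mul, Finset.sum_add_distrib]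

@[simp] lemma linearForm_unitvec (k : Fin n) : linearForm x (unitvec k) = x k := by
  simp [linearForm, unitvec]

lemma hasSum_mul_linearForm {c : (Fin n → ℕ) → ℝ} {M : Fin n → ℝ}
    (hM : ∀ l, HasSum (fun j : Fin n → ℕ => c j * (j l : ℝ)) (M l)) :
    HasSum (fun j => c j * linearForm x j) (∑ l, M l * x l) := by
  simpa only [linearForm, Finset.mul_sum, mul_assoc] using
    hasSum_sum fun l _ => (hM l).mul_right (x l)

end LinearForm

lemma moment_nonneg {n : ℕ} {c : (Fin n → ℕ) → ℝ} (hc : ∀ j, j ≠ 0 → 0 ≤ c j) {l : Fin n}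
    {M : ℝ} (hM : HasSum (fun j : Fin n → ℕ => c j * (j l : ℝ)) M) : 0 ≤ M := by
  refine hM.nonneg fun j => ?_
  rcases eq_or_ne j 0 with rfl | hj
  · simp
  · exact mul_nonneg (hc j hj) (Nat.cast_nonneg _)

section Drift

variable {n : ℕ} (x : Fin n → ℝ)

lemma hasSum_immigration_drift {a : (Fin n → ℕ) → ℝ} {Al : Fin n → ℝ}
    (hAl : ∀ l, HasSum (fun j : Fin n → ℕ => a j * (j l : ℝ)) (Al l)) (i : Fin n → ℕ) :
    HasSum (fun j => (if ∀ l, i l ≤ j l then a (fun l => j l - i l) else 0) *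
      (linearForm x j - linearForm x i)) (∑ l, Al l * x l) := by
  classical
  convert (hasSum_ite_le_tsub_iff i).mpr (hasSum_mul_linearForm x hAl) using 2 with j
  by_cases hij : i ≤ j
  · obtain ⟨m, rfl⟩ := exists_add_of_le hij
    simp [linearForm_add]
  · simp [← Pi.le_def, hij]

lemma hasSum_branching_drift {b : (Fin n → ℕ) → ℝ} {B : Fin n → ℝ} (hb : HasSum b 0)
    (hB : ∀ l, HasSum (fun j : Fin n → ℕ => b j * (j l : ℝ)) (B l)) (i : Fin n → ℕ) (k : Fin n) :
    HasSum (fun j => (if ∀ l, i l ≤ j l + unitvec k l then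
        (i k : ℝ) * b (fun l => j l + unitvec k l - i l) else 0) *
      (linearForm x j - linearForm x i)) ((i k : ℝ) * ∑ l, B l * x l) := by
  classical
  rcases Nat.eq_zero_or_pos (i k) with hik | hik
  · simp [hik]
  obtain ⟨s, rfl⟩ : ∃ s, i = s + unitvec k := by
    refine ⟨i - unitvec k, (tsub_add_cancel_of_le fun l => ?_).symm⟩
    by_cases hl : l = k <;> simp [unitvec, hl]
    omega
  set c : ℝ := (((s + unitvec k) k : ℕ) : ℝ)
  have hF : HasSum (fun m => c * (b m * linearForm x m - b m * x k))
      (c * (∑ l, B l * x l - 0 * x k)) :=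
    ((hasSum_mul_linearForm x hB).sub (hb.mul_right (x k))).mul_left c
  rw [zero_mul, sub_zero] at hF
  convert (hasSum_ite_le_tsub_iff s).mpr hF using 2 with j
  by_cases hsj : s ≤ j
  · obtain ⟨m, rfl⟩ := exists_add_of_le hsj
    have hcond : ∀ l, (s + unitvec k) l ≤ (s + m) l + unitvec k l := fun l => by
      simp only [Pi.add_apply]; omega
    have harg : (fun l => (s + m) l + unitvec k l - (s + unitvec k) l) = m := funext fun l => by
      simp only [Pi.add_apply]; omega
    simp only [if_pos hcond, harg, if_pos hsj, add_tsub_cancel_left, linearForm_add,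
      linearForm_unitvec]
    ring
  · have hcond : ¬ ∀ l, (s + unitvec k) l ≤ j l + unitvec k l := fun h =>
      hsj fun l => by
        have := h l
        simp only [Pi.add_apply] at this
        exact Nat.le_of_add_le_add_right this
    simp only [if_neg hcond, if_neg hsj, zero_mul]

variable {h a : (Fin n → ℕ) → ℝ} {b : Fin n → (Fin n → ℕ) → ℝ}

lemma hasSum_qmat_drift_zero {Hl : Fin n → ℝ}
    (hHl : ∀ l, HasSum (fun j : Fin n → ℕ => h j * (j l : ℝ)) (Hl l)) :
    HasSum (fun j => qmat h a b 0 j * (linearForm x j - linearForm x 0)) (∑ l, Hl l * x l) := by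
  simpa [qmat] using hasSum_mul_linearForm x hHl

lemma hasSum_qmat_drift_of_ne_zero {Bm : Matrix (Fin n) (Fin n) ℝ} {Al : Fin n → ℝ}
    (hb : ∀ k, HasSum (b k) 0)
    (hBm : ∀ k l, HasSum (fun j : Fin n → ℕ => b k j * (j l : ℝ)) (Bm k l))
    (hAl : ∀ l, HasSum (fun j : Fin n → ℕ => a j * (j l : ℝ)) (Al l))
    {i : Fin n → ℕ} (hi : i ≠ 0) :
    HasSum (fun j => qmat h a b i j * (linearForm x j - linearForm x i))
      (∑ k, (i k : ℝ) * ∑ l, Bm k l * x l + ∑ l, Al l * x l) := by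
  simp only [qmat, if_neg hi, add_mul, Finset.sum_mul]
  exact (hasSum_sum fun k _ => hasSum_branching_drift x (hb k) (hBm k) i k).add
    (hasSum_immigration_drift x hAl i)

end Drift

lemma sum_mul_le_sum_mul_of_le {ι : Type*} [Fintype ι] {M x : ι → ℝ} (hM : ∀ l, 0 ≤ M l)
    {mx : ℝ} (hx : ∀ l, x l ≤ mx) : ∑ l, M l * x l ≤ (∑ l, M l) * mx := by
  rw [Finset.sum_mul]
  exact Finset.sum_le_sum fun l _ => mul_le_mul_of_nonneg_left (hx l) (hM l)

theorem stmt_10_general {n : ℕ} (h a : (Fin n → ℕ) → ℝ)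
    (b : Fin n → (Fin n → ℕ) → ℝ)
    (hhnn : ∀ j : Fin n → ℕ, j ≠ 0 → 0 ≤ h j)
    (hann : ∀ j : Fin n → ℕ, j ≠ 0 → 0 ≤ a j)
    (hbval : ∀ i, HasSum (fun j : {j : Fin n → ℕ // j ≠ unitvec i} => b i j.1)
      (-(b i (unitvec i))))
    -- first moments: mean matrix `B_{kl}(1,…,1)`, `A_l(1,…,1)`, `H_l(1,…,1)`
    (Bm : Matrix (Fin n) (Fin n) ℝ)
    (hBm : ∀ k l, HasSum (fun j : Fin n → ℕ => b k j * (j l : ℝ)) (Bm k l))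
    (Al Hl : Fin n → ℝ)
    (hAl : ∀ l, HasSum (fun j : Fin n → ℕ => a j * (j l : ℝ)) (Al l))
    (hHl : ∀ l, HasSum (fun j : Fin n → ℕ => h j * (j l : ℝ)) (Hl l))
    -- eigen-structure: `ρ < 0`, positive right eigenvector `x`
    (ρ : ℝ)
    (x : Fin n → ℝ) (hxpos : ∀ k, 0 < x k)
    (heig : ∀ k, ∑ l, Bm k l * x l = ρ * x k)
    (mx : ℝ) (hmx : IsGreatest (Set.range x) mx)
    (C1 C2 : ℝ)
    (hC1 : C1 = max (∑ l, Al l) (∑ l, Hl l) * mx)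
    (hC2 : C2 = -ρ)
    (f : (Fin n → ℕ) → ℝ)
    (hf : ∀ i : Fin n → ℕ, f i = ∑ k, (i k : ℝ) * x k) :
    ∀ i : Fin n → ℕ, ∃ V : ℝ,
      HasSum (fun j : Fin n → ℕ => qmat h a b i j * (f j - f i)) V ∧
      V ≤ C1 - C2 * f i := by
  obtain rfl : f = linearForm x := funext hf
  have hmx0 : 0 ≤ mx := by
    obtain ⟨⟨k, rfl⟩, -⟩ := hmx
    exact (hxpos k).le
  have hxle : ∀ l, x l ≤ mx := fun l => hmx.2 ⟨l, rfl⟩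
  intro i
  rcases eq_or_ne i 0 with rfl | hi
  · refine ⟨_, hasSum_qmat_drift_zero x hHl, ?_⟩
    calc ∑ l, Hl l * x l ≤ (∑ l, Hl l) * mx :=
          sum_mul_le_sum_mul_of_le (fun l => moment_nonneg hhnn (hHl l)) hxle
      _ ≤ C1 := by rw [hC1]; gcongr; exact le_max_right _ _
      _ = C1 - C2 * linearForm x 0 := by simp
  · refine ⟨_, hasSum_qmat_drift_of_ne_zero x (fun k => (hbval k).zero_of_compl_singleton)
      hBm hAl hi, ?_⟩
    have hbranch : ∑ k, (i k : ℝ) * ∑ l, Bm k l * x l = ρ * linearForm x i := by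
      simp only [heig, linearForm, Finset.mul_sum]
      exact Finset.sum_congr rfl fun k _ => by ring
    have himm : ∑ l, Al l * x l ≤ C1 := by
      calc ∑ l, Al l * x l ≤ (∑ l, Al l) * mx :=
            sum_mul_le_sum_mul_of_le (fun l => moment_nonneg hann (hAl l)) hxle
        _ ≤ C1 := by rw [hC1]; gcongr; exact le_max_left _ _
    rw [hbranch, hC2]
    linarith

/-- Lyapunov drift for exponential ergodicity: if the mean
matrix `B(1,…,1)` has maximal eigenvalue `ρ < 0` with positive eigenvector
`x`, and the first moments of immigration/resurrection are finite, then with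
`f_i = ∑_k i_k x_k`, `C_2 = -ρ`, `C_1 = (∑A_j ∨ ∑H_j)·max_k x_k`, for every
state `i`: `∑_j q_{ij}(f_j - f_i) ≤ C_1 - C_2 f_i`. -/
theorem stmt_10 {n : ℕ} (hn : 0 < n) (h a : (Fin n → ℕ) → ℝ)
    (b : Fin n → (Fin n → ℕ) → ℝ)
    (hhnn : ∀ j : Fin n → ℕ, j ≠ 0 → 0 ≤ h j)
    (hhsum : Summable h)
    (hhval : HasSum (fun j : {j : Fin n → ℕ // j ≠ 0} => h j.1) (-h 0))
    (hhpos : 0 < -h 0)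
    (hann : ∀ j : Fin n → ℕ, j ≠ 0 → 0 ≤ a j)
    (hasum : Summable a)
    (haval : HasSum (fun j : {j : Fin n → ℕ // j ≠ 0} => a j.1) (-a 0))
    (hapos : 0 < -a 0)
    (hbnn : ∀ i j, j ≠ unitvec i → 0 ≤ b i j)
    (hbsum : ∀ i, Summable (b i))
    (hbval : ∀ i, HasSum (fun j : {j : Fin n → ℕ // j ≠ unitvec i} => b i j.1)
      (-(b i (unitvec i))))
    (hbpos : ∀ i, 0 < -(b i (unitvec i)))
    -- first moments: mean matrix `B_{kl}(1,…,1)`, `A_l(1,…,1)`, `H_l(1,…,1)`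
    (Bm : Matrix (Fin n) (Fin n) ℝ)
    (hBm : ∀ k l, HasSum (fun j : Fin n → ℕ => b k j * (j l : ℝ)) (Bm k l))
    (Al Hl : Fin n → ℝ)
    (hAl : ∀ l, HasSum (fun j : Fin n → ℕ => a j * (j l : ℝ)) (Al l))
    (hHl : ∀ l, HasSum (fun j : Fin n → ℕ => h j * (j l : ℝ)) (Hl l))
    -- eigen-structure: `ρ < 0`, positive right eigenvector `x`
    (ρ : ℝ) (hρ : ρ < 0)
    (x : Fin n → ℝ) (hxpos : ∀ k, 0 < x k)
    (heig : ∀ k, ∑ l, Bm k l * x l = ρ * x k)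
    (mx : ℝ) (hmx : IsGreatest (Set.range x) mx)
    (C1 C2 : ℝ)
    (hC1 : C1 = max (∑ l, Al l) (∑ l, Hl l) * mx)
    (hC2 : C2 = -ρ)
    (f : (Fin n → ℕ) → ℝ)
    (hf : ∀ i : Fin n → ℕ, f i = ∑ k, (i k : ℝ) * x k) :
    ∀ i : Fin n → ℕ, ∃ V : ℝ,
      HasSum (fun j : Fin n → ℕ => qmat h a b i j * (f j - f i)) V ∧
      V ≤ C1 - C2 * f i :=
  stmt_10_general h a b hhnn hann hbval Bm hBm Al Hl hAl hHl ρ x hxpos heig mx hmx C1 C2 hC1 hC2 f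
    hf
end

section
/- (Branching factorization implies Feller–Reuter–Riley) Let $P(t)=(p_{\mathbf{ij}}(t))$ be a standard transition function on $\mathbb{Z}_+^n$ whose generating functions satisfy $F_{\mathbf{i}}(t,\mathbf{s})=F_{\mathbf{0}}(t,\mathbf{s})\prod_{k=1}^n (F_{\mathbf{e}_k}(t,\mathbf{s})/F_{\mathbf{0}}(t,\mathbf{s}))^{i_k}$ for all $\mathbf{i}$, $t\ge0$, $\mathbf{s}\in[-1,1]^n$, where $F_{\mathbf{i}}(t,\mathbf{s})=\sum_{\mathbf{j}}p_{\mathbf{ij}}(t)\mathbf{s}^{\mathbf{j}}$. Then there exist $\tilde t>0$ and $\tilde{\mathbf{s}}\in(0,1)^n$ with $F_{\mathbf{e}_k}(\tilde t,\tilde{\mathbf{s}})<F_{\mathbf{0}}(\tilde t,\tilde{\mathbf{s}})$ for each $k$, and consequently $\lim_{|\mathbf{i}|\to\infty} p_{\mathbf{ij}}(t)=0$ for every $\mathbf{j}$ and $t>0$. -/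
open Filter Topology Set

/-- branching factorization implies Feller–Reuter–Riley: for a
standard transition function on `ℤ_+^n` whose generating functions satisfy
`F_i(t,s) = F_0(t,s) ∏_k (F_{e_k}(t,s)/F_0(t,s))^{i_k}`, there exist `t̃ > 0`
and `s̃ ∈ (0,1)^n` with `F_{e_k}(t̃,s̃) < F_0(t̃,s̃)` for each `k`, and
consequently `p_{ij}(t) → 0` as `|i| → ∞`, for every `j` and `t > 0`. -/
theorem stmt_12 {n : ℕ} (p : (Fin n → ℕ) → (Fin n → ℕ) → ℝ → ℝ)
    (hnn : ∀ i j t, 0 ≤ t → 0 ≤ p i j t)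
    (hsub : ∀ i t, 0 ≤ t → ∀ S : Finset (Fin n → ℕ), ∑ j ∈ S, p i j t ≤ 1)
    (hck : ∀ i j s t, 0 ≤ s → 0 ≤ t →
      p i j (s + t) = ∑' k : Fin n → ℕ, p i k s * p k j t)
    (hinit : ∀ i j, p i j 0 = if i = j then (1:ℝ) else 0)
    (hstd : ∀ i j, Tendsto (fun t => p i j t) (nhdsWithin 0 (Ioi 0))
      (nhds (if i = j then (1:ℝ) else 0)))
    (F : (Fin n → ℕ) → ℝ → (Fin n → ℝ) → ℝ)
    (hF : ∀ i t s, F i t s = ∑' j : Fin n → ℕ, p i j t * ∏ l, s l ^ j l)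
    (hfact : ∀ (i : Fin n → ℕ) (t : ℝ) (s : Fin n → ℝ), 0 ≤ t →
      (∀ l, s l ∈ Icc (-1:ℝ) 1) →
      F i t s = F 0 t s * ∏ k, (F (unitvec k) t s / F 0 t s) ^ i k) :
    (∃ t > (0:ℝ), ∃ s : Fin n → ℝ, (∀ l, s l ∈ Ioo (0:ℝ) 1) ∧
      ∀ k, F (unitvec k) t s < F 0 t s) ∧
    ∀ (j : Fin n → ℕ), ∀ t > (0:ℝ),
      Tendsto (fun i : Fin n → ℕ => p i j t)
        (Filter.comap (fun i : Fin n → ℕ => ∑ k, i k) Filter.atTop)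
        (nhds 0) := by
    classical
  have hp1 : ∀ i j t, 0 ≤ t → p i j t ≤ 1 := by
    intro i j t ht
    simpa using hsub i t ht {j}
  have hsumm : ∀ i t, 0 ≤ t → Summable fun j => p i j t := fun i t ht =>
    summable_of_sum_le (fun j => hnn i j t ht) (hsub i t ht)
  have htsum1 : ∀ i t, 0 ≤ t → ∑' j, p i j t ≤ 1 := fun i t ht =>
    Summable.tsum_le_of_sum_le (hsumm i t ht) (hsub i t ht)
  set s' : Fin n → ℝ := fun _ => 1/2 with hs'
  have hs'mem : ∀ l, s' l ∈ Icc (-1:ℝ) 1 := fun l => ⟨by norm_num [hs'], by norm_num [hs']⟩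
  have hmono0 : ∀ j : Fin n → ℕ, 0 ≤ ∏ l, s' l ^ j l := fun j =>
    Finset.prod_nonneg fun l _ => pow_nonneg (by norm_num [hs']) _
  have hmono1 : ∀ j : Fin n → ℕ, ∏ l, s' l ^ j l ≤ 1 := fun j =>
    Finset.prod_le_one (fun l _ => pow_nonneg (by norm_num [hs']) _)
      (fun l _ => pow_le_one₀ (by norm_num [hs']) (by norm_num [hs']))
  have hFsumm : ∀ i t, 0 ≤ t → Summable fun j => p i j t * ∏ l, s' l ^ j l := fun i t ht =>
    Summable.of_nonneg_of_le (fun j => mul_nonneg (hnn i j t ht) (hmono0 j))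
      (fun j => mul_le_of_le_one_right (hnn i j t ht) (hmono1 j)) (hsumm i t ht)
  have hFle1 : ∀ i t, 0 ≤ t → F i t s' ≤ 1 := by
    intro i t ht
    rw [hF]
    exact le_trans (Summable.tsum_le_tsum (fun j => mul_le_of_le_one_right (hnn i j t ht) (hmono1 j))
      (hFsumm i t ht) (hsumm i t ht)) (htsum1 i t ht)
  have hFge : ∀ i t (j₀ : Fin n → ℕ), 0 ≤ t → p i j₀ t * ∏ l, s' l ^ j₀ l ≤ F i t s' := by
    intro i t j₀ ht
    rw [hF]
    exact Summable.le_tsum (hFsumm i t ht) j₀ (fun j _ => mul_nonneg (hnn i j t ht) (hmono0 j))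
  have hFupper : ∀ i t (j₀ : Fin n → ℕ), 0 ≤ t →
      F i t s' ≤ p i j₀ t * ∏ l, s' l ^ j₀ l + (1 - p i j₀ t) := by
    intro i t j₀ ht
    rw [hF, Summable.tsum_eq_add_tsum_ite (hFsumm i t ht) j₀]
    have hsum1 : Summable fun j => if j = j₀ then (0:ℝ) else p i j t * ∏ l, s' l ^ j l := by
      apply Summable.of_nonneg_of_le _ _ (hFsumm i t ht)
      · intro j; split
        · exact le_refl _
        · exact mul_nonneg (hnn i j t ht) (hmono0 j)
      · intro j; split
        · exact mul_nonneg (hnn i j t ht) (hmono0 j)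
        · exact le_refl _
    have hsum2 : Summable fun j => if j = j₀ then (0:ℝ) else p i j t := by
      apply Summable.of_nonneg_of_le _ _ (hsumm i t ht)
      · intro j; split
        · exact le_refl _
        · exact hnn i j t ht
      · intro j; split
        · exact hnn i j t ht
        · exact le_refl _
    have h1 : (∑' j, if j = j₀ then (0:ℝ) else p i j t * ∏ l, s' l ^ j l)
        ≤ ∑' j, if j = j₀ then (0:ℝ) else p i j t := by
      apply Summable.tsum_le_tsum _ hsum1 hsum2
      intro j; split
      · exact le_refl _
      · exact mul_le_of_le_one_right (hnn i j t ht) (hmono1 j)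
    have h2 : p i j₀ t + (∑' j, if j = j₀ then (0:ℝ) else p i j t) ≤ 1 := by
      rw [← Summable.tsum_eq_add_tsum_ite (hsumm i t ht) j₀]
      exact htsum1 i t ht
    linarith
  -- choose small t̃
  have hev : ∀ᶠ t in nhdsWithin (0:ℝ) (Ioi 0),
      ((3/4:ℝ) < p 0 0 t ∧ ∀ k : Fin n, (3/4:ℝ) < p (unitvec k) (unitvec k) t)
        ∧ t ∈ Ioi (0:ℝ) := by
    refine Filter.Eventually.and (Filter.Eventually.and ?_ ?_) self_mem_nhdsWithin
    · have h := hstd 0 0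
      rw [if_pos rfl] at h
      exact h.eventually (eventually_gt_nhds (by norm_num))
    · rw [eventually_all]
      intro k
      have h := hstd (unitvec k) (unitvec k)
      rw [if_pos rfl] at h
      exact h.eventually (eventually_gt_nhds (by norm_num))
  obtain ⟨t₀, ⟨hb, ha⟩, ht₀⟩ := hev.exists
  have ht₀0 : (0:ℝ) < t₀ := ht₀
  -- monomial values
  have hmonu : ∀ k, (∏ l, s' l ^ (unitvec k) l) = 1/2 := by
    intro k
    simp only [hs', unitvec, pow_ite, pow_one, pow_zero]
    rw [Finset.prod_ite_eq' Finset.univ k (fun _ => (1:ℝ)/2)]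
    simp
  have hmon0 : (∏ l, s' l ^ (0 : Fin n → ℕ) l) = 1 := by
    simp
  -- part 1 inequalities
  have hF0ge : (3/4:ℝ) < F 0 t₀ s' := by
    have h2 := hFge 0 t₀ 0 ht₀0.le
    rw [hmon0, mul_one] at h2
    linarith
  have hlt : ∀ k, F (unitvec k) t₀ s' < F 0 t₀ s' := by
    intro k
    have h1 := hFupper (unitvec k) t₀ (unitvec k) ht₀0.le
    rw [hmonu k] at h1
    have hak := ha k
    linarith
  set L := Filter.comap (fun i : Fin n → ℕ => ∑ k, i k) Filter.atTop with hL
  -- FRR at t₀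
  have key : ∀ j, Tendsto (fun i => p i j t₀) L (nhds 0) := by
    rcases isEmpty_or_nonempty (Fin n) with hn | hn
    · have hbot : L = ⊥ := by
        rw [hL, ← Filter.empty_mem_iff_bot]
        refine Filter.mem_comap.2 ⟨Ici 1, Filter.mem_atTop 1, ?_⟩
        intro i hi
        simp only [mem_preimage, mem_Ici, Finset.univ_eq_empty, Finset.sum_empty] at hi
        exact absurd hi (by omega)
      intro j
      rw [hbot]
      exact tendsto_bot
    · set r : Fin n → ℝ := fun k => F (unitvec k) t₀ s' / F 0 t₀ s' with hr
      have hF0pos : 0 < F 0 t₀ s' := by linarith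
      have hr0 : ∀ k, 0 ≤ r k := by
        intro k
        apply div_nonneg _ hF0pos.le
        have := hFge (unitvec k) t₀ (unitvec k) ht₀0.le
        have hk2 := hnn (unitvec k) (unitvec k) t₀ ht₀0.le
        rw [hmonu k] at this
        nlinarith
      have hr1 : ∀ k, r k < 1 := fun k => (div_lt_one hF0pos).2 (hlt k)
      obtain ⟨k₀, hk₀⟩ := Finite.exists_max r
      have hbound : ∀ i j : Fin n → ℕ, p i j t₀ ≤ (2:ℝ)^(∑ l, j l) * (r k₀)^(∑ k, i k) := by
        intro i j
        have h1 : p i j t₀ * ∏ l, s' l ^ j l ≤ F i t₀ s' := hFge i t₀ j ht₀0.le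
        have h2 : F i t₀ s' = F 0 t₀ s' * ∏ k, r k ^ i k := hfact i t₀ s' ht₀0.le hs'mem
        have h3 : ∏ k, r k ^ i k ≤ ∏ k, (r k₀) ^ i k :=
          Finset.prod_le_prod (fun k _ => pow_nonneg (hr0 k) _)
            (fun k _ => pow_le_pow_left₀ (hr0 k) (hk₀ k) _)
        have h4 : F 0 t₀ s' * ∏ k, r k ^ i k ≤ (r k₀)^(∑ k, i k) := by
          rw [← Finset.prod_pow_eq_pow_sum]
          calc F 0 t₀ s' * ∏ k, r k ^ i k ≤ 1 * ∏ k, (r k₀) ^ i k :=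
                mul_le_mul (hFle1 0 t₀ ht₀0.le) h3
                  (Finset.prod_nonneg fun k _ => pow_nonneg (hr0 k) _) zero_le_one
            _ = ∏ k, (r k₀) ^ i k := one_mul _
        have hmonj : ∏ l, s' l ^ j l = ((1:ℝ)/2)^(∑ l, j l) := by
          rw [hs']
          exact Finset.prod_pow_eq_pow_sum Finset.univ j _
        have h5 : p i j t₀ * ((1:ℝ)/2)^(∑ l, j l) ≤ (r k₀)^(∑ k, i k) := by
          rw [← hmonj]; exact le_trans h1 (h2 ▸ h4)
        have hpos2 : (0:ℝ) < ((1:ℝ)/2)^(∑ l, j l) := by positivity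
        have hinv : (2:ℝ)^(∑ l, j l) * ((1:ℝ)/2)^(∑ l, j l) = 1 := by
          rw [← mul_pow]; norm_num
        calc p i j t₀ = (2:ℝ)^(∑ l, j l) * (p i j t₀ * ((1:ℝ)/2)^(∑ l, j l)) := by
              rw [mul_comm (p i j t₀), ← mul_assoc, hinv, one_mul]
          _ ≤ (2:ℝ)^(∑ l, j l) * (r k₀)^(∑ k, i k) :=
              mul_le_mul_of_nonneg_left h5 (by positivity)
      intro j
      apply squeeze_zero (fun i => hnn i j t₀ ht₀0.le) (fun i => hbound i j)
      have h5 : Tendsto (fun i : Fin n → ℕ => (r k₀)^(∑ k, i k)) L (nhds 0) :=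
        (tendsto_pow_atTop_nhds_zero_of_lt_one (hr0 k₀) (hr1 k₀)).comp tendsto_comap
      simpa using h5.const_mul ((2:ℝ)^(∑ l, j l))
  -- Lévy positivity
  have hsuperadd : ∀ (j : Fin n → ℕ) (x y : ℝ), 0 ≤ x → 0 ≤ y →
      p j j x * p j j y ≤ p j j (x + y) := by
    intro j x y hx hy
    rw [hck j j x y hx hy]
    have hs2 : Summable fun m => p j m x * p m j y :=
      Summable.of_nonneg_of_le (fun m => mul_nonneg (hnn _ _ _ hx) (hnn _ _ _ hy))
        (fun m => mul_le_of_le_one_right (hnn _ _ _ hx) (hp1 _ _ _ hy)) (hsumm j x hx)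
    exact Summable.le_tsum hs2 j (fun m _ => mul_nonneg (hnn _ _ _ hx) (hnn _ _ _ hy))
  have hpow : ∀ (j : Fin n → ℕ) (w : ℝ), 0 ≤ w → ∀ m : ℕ, (p j j w)^m ≤ p j j (m * w) := by
    intro j w hw m
    induction m with
    | zero => simp [hinit]
    | succ m ih =>
      have h1 : p j j (m*w) * p j j w ≤ p j j (m*w + w) :=
        hsuperadd j _ w (by positivity) hw
      have hmm : p j j (m*w) ≥ 0 := hnn _ _ _ (by positivity)
      calc (p j j w)^(m+1) = (p j j w)^m * p j j w := pow_succ _ _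
        _ ≤ p j j (m*w) * p j j w := mul_le_mul_of_nonneg_right ih (hnn _ _ _ hw)
        _ ≤ p j j (m*w + w) := h1
        _ = p j j ((m+1 : ℕ) * w) := by push_cast; ring_nf
  have hpos : ∀ (j : Fin n → ℕ) (v : ℝ), 0 ≤ v → 0 < p j j v := by
    intro j v hv
    rcases eq_or_lt_of_le hv with h0 | hv0
    · rw [← h0, hinit, if_pos rfl]; norm_num
    · have h := hstd j j
      rw [if_pos rfl] at h
      have hev2 : ∀ᶠ u in nhdsWithin (0:ℝ) (Ioi 0), (1/2:ℝ) < p j j u :=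
        h.eventually (eventually_gt_nhds (by norm_num))
      obtain ⟨δ, hδ0, hδ⟩ := (nhdsGT_basis (0:ℝ)).eventually_iff.1 hev2
      obtain ⟨m, hm⟩ := exists_nat_gt (v / δ)
      have hm0 : (0:ℝ) < m := lt_of_le_of_lt (by positivity) hm
      have hw1 : 0 < v / m := div_pos hv0 hm0
      have hw2 : v / m < δ := by
        rw [div_lt_iff₀ hm0]
        rw [div_lt_iff₀ hδ0] at hm
        linarith [hm]
      have hvm : (m:ℝ) * (v/m) = v := by field_simp
      have h1 := hpow j (v/m) hw1.le m
      rw [hvm] at h1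
      have h2 : ((1:ℝ)/2)^m ≤ (p j j (v/m))^m :=
        pow_le_pow_left₀ (by norm_num) (hδ ⟨hw1, hw2⟩).le m
      have h3 : (0:ℝ) < ((1:ℝ)/2)^m := by positivity
      linarith
  -- downward closedness
  have hdown : ∀ (T t : ℝ) (j : Fin n → ℕ), 0 < t → t < T →
      Tendsto (fun i => p i j T) L (nhds 0) → Tendsto (fun i => p i j t) L (nhds 0) := by
    intro T t j ht hT htd
    have hc : 0 < p j j (T - t) := hpos j (T-t) (by linarith)
    have hb2 : ∀ i, p i j t ≤ (p j j (T-t))⁻¹ * p i j T := by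
      intro i
      have h2 := hck i j t (T - t) ht.le (by linarith)
      rw [show t + (T - t) = T by ring] at h2
      have hs2 : Summable fun m => p i m t * p m j (T-t) :=
        Summable.of_nonneg_of_le
          (fun m => mul_nonneg (hnn _ _ _ ht.le) (hnn _ _ _ (by linarith)))
          (fun m => mul_le_of_le_one_right (hnn _ _ _ ht.le) (hp1 _ _ _ (by linarith)))
          (hsumm i t ht.le)
      have h1 : p i j t * p j j (T - t) ≤ p i j T := by
        rw [h2]
        exact Summable.le_tsum hs2 j (fun m _ =>
          mul_nonneg (hnn _ _ _ ht.le) (hnn _ _ _ (by linarith)))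
      rw [inv_mul_eq_div, le_div_iff₀ hc]
      exact h1
    apply squeeze_zero (fun i => hnn i j t ht.le) hb2
    simpa using htd.const_mul (p j j (T-t))⁻¹
  -- additivity
  have hadd : ∀ (t₁ t₂ : ℝ), 0 < t₁ → 0 < t₂ →
      (∀ j, Tendsto (fun i => p i j t₁) L (nhds 0)) →
      (∀ j, Tendsto (fun i => p i j t₂) L (nhds 0)) →
      ∀ j, Tendsto (fun i => p i j (t₁+t₂)) L (nhds 0) := by
    intro t₁ t₂ h1 h2 hT1 hT2 j
    rw [NormedAddCommGroup.tendsto_nhds_zero]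
    intro ε hε
    have hev2 : ∀ᶠ i in L, ‖p i j t₂‖ < ε/2 :=
      (NormedAddCommGroup.tendsto_nhds_zero.1 (hT2 j)) (ε/2) (by positivity)
    rw [hL, Filter.eventually_comap] at hev2
    obtain ⟨N, hN⟩ := eventually_atTop.1 hev2
    set S : Finset (Fin n → ℕ) := Fintype.piFinset (fun _ => Finset.range N) with hS
    have hSbound : ∀ m : Fin n → ℕ, m ∉ S → p m j t₂ ≤ ε/2 := by
      intro m hm
      have hex : ∃ k, ¬ m k < N := by
        simpa [hS, Fintype.mem_piFinset, Finset.mem_range] using hm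
      obtain ⟨k, hk⟩ := hex
      have hSig : N ≤ ∑ l, m l :=
        le_trans (not_lt.1 hk) (Finset.single_le_sum (fun _ _ => Nat.zero_le _) (Finset.mem_univ k))
      have hmj := hN (∑ l, m l) hSig m rfl
      have hnp := hnn m j t₂ h2.le
      rw [Real.norm_eq_abs, abs_of_nonneg hnp] at hmj
      linarith
    have hev1 : ∀ᶠ i in L, ∀ m ∈ S, p i m t₁ < ε/(2*(S.card+1)) := by
      rw [eventually_all_finset]
      intro m hm
      have hc := (NormedAddCommGroup.tendsto_nhds_zero.1 (hT1 m)) (ε/(2*(S.card+1)))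
        (by positivity)
      filter_upwards [hc] with i hi
      calc p i m t₁ ≤ |p i m t₁| := le_abs_self _
        _ < _ := by rw [Real.norm_eq_abs] at hi; exact hi
    filter_upwards [hev1] with i hi
    have hnp : 0 ≤ p i j (t₁+t₂) := hnn _ _ _ (by positivity)
    rw [Real.norm_eq_abs, abs_of_nonneg hnp]
    have hfs : Summable fun m => p i m t₁ * p m j t₂ :=
      Summable.of_nonneg_of_le
        (fun m => mul_nonneg (hnn _ _ _ h1.le) (hnn _ _ _ h2.le))
        (fun m => mul_le_of_le_one_right (hnn _ _ _ h1.le) (hp1 _ _ _ h2.le))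
        (hsumm i t₁ h1.le)
    have hsplit := Summable.sum_add_tsum_compl (s := S) hfs
    rw [hck i j t₁ t₂ h1.le h2.le, ← hsplit]
    have e1 : ∑ m ∈ S, p i m t₁ * p m j t₂ ≤ ∑ m ∈ S, p i m t₁ :=
      Finset.sum_le_sum fun m _ => mul_le_of_le_one_right (hnn _ _ _ h1.le) (hp1 _ _ _ h2.le)
    have e1' : ∑ m ∈ S, p i m t₁ ≤ S.card * (ε/(2*(S.card+1))) := by
      have := Finset.sum_le_card_nsmul S (fun m => p i m t₁) (ε/(2*(S.card+1)))
        (fun m hm => (hi m hm).le)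
      rwa [nsmul_eq_mul] at this
    have e1'' : (S.card : ℝ) * (ε/(2*(S.card+1))) < ε/2 := by
      have gen : ∀ c : ℝ, 0 ≤ c → c * (ε/(2*(c+1))) < ε/2 := by
        intro c hc
        have h1 : (0:ℝ) < 2*(c+1) := by linarith
        rw [mul_div_assoc']
        rw [div_lt_div_iff₀ h1 (by norm_num : (0:ℝ) < 2)]
        nlinarith
      exact gen (S.card : ℝ) (Nat.cast_nonneg _)
    have e2 : (∑' m : ↑((↑S : Set (Fin n → ℕ))ᶜ), p i ↑m t₁ * p ↑m j t₂) ≤ ε/2 := by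
      have hsub1 : Summable fun m : ↑((↑S : Set (Fin n → ℕ))ᶜ) => p i ↑m t₁ * p ↑m j t₂ :=
        hfs.subtype _
      have hsub2 : Summable fun m : ↑((↑S : Set (Fin n → ℕ))ᶜ) => p i ↑m t₁ * (ε/2) :=
        ((hsumm i t₁ h1.le).subtype _).mul_right _
      have step1 : (∑' m : ↑((↑S : Set (Fin n → ℕ))ᶜ), p i ↑m t₁ * p ↑m j t₂)
          ≤ ∑' m : ↑((↑S : Set (Fin n → ℕ))ᶜ), p i ↑m t₁ * (ε/2) := by
        apply Summable.tsum_le_tsum _ hsub1 hsub2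
        intro m
        exact mul_le_mul_of_nonneg_left (hSbound m (fun hmem => m.2 (Finset.mem_coe.2 hmem))) (hnn _ _ _ h1.le)
      have step2 : (∑' m : ↑((↑S : Set (Fin n → ℕ))ᶜ), p i ↑m t₁ * (ε/2))
          = (∑' m : ↑((↑S : Set (Fin n → ℕ))ᶜ), p i ↑m t₁) * (ε/2) := tsum_mul_right
      have step3 : (∑' m : ↑((↑S : Set (Fin n → ℕ))ᶜ), p i ↑m t₁) ≤ 1 := by
        refine le_trans (Summable.tsum_subtype_le (fun m => p i m t₁) _
          (fun m => hnn _ _ _ h1.le) (hsumm i t₁ h1.le)) (htsum1 i t₁ h1.le)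
      calc (∑' m : ↑((↑S : Set (Fin n → ℕ))ᶜ), p i ↑m t₁ * p ↑m j t₂)
          ≤ (∑' m : ↑((↑S : Set (Fin n → ℕ))ᶜ), p i ↑m t₁) * (ε/2) := by
            rw [← step2]; exact step1
        _ ≤ 1 * (ε/2) := mul_le_mul_of_nonneg_right step3 (by positivity)
        _ = ε/2 := one_mul _
    linarith
  -- conclusion
  refine ⟨⟨t₀, ht₀0, s', fun l => ⟨by norm_num [hs'], by norm_num [hs']⟩, hlt⟩, ?_⟩
  have hQm : ∀ m : ℕ, ∀ j, Tendsto (fun i => p i j ((m+1 : ℕ) * t₀)) L (nhds 0) := by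
    intro m
    induction m with
    | zero => simpa using key
    | succ m ih =>
      intro j
      have h := hadd ((m+1 : ℕ) * t₀) t₀ (by positivity) ht₀0 ih key j
      have heq : ((m+1 : ℕ) : ℝ) * t₀ + t₀ = ((m+2 : ℕ) : ℝ) * t₀ := by push_cast; ring
      rw [heq] at h
      exact h
  intro j t ht
  obtain ⟨m, hm⟩ := exists_nat_gt (t / t₀)
  have hmt : t < m * t₀ := by
    rw [div_lt_iff₀ ht₀0] at hm
    exact hm
  have hm1 : 1 ≤ m := by
    by_contra hc
    push_neg at hc
    interval_cases m
    simp at hmt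
    linarith
  obtain ⟨m', rfl⟩ : ∃ m', m = m' + 1 := ⟨m - 1, by omega⟩
  exact hdown ((m'+1 : ℕ) * t₀) t j ht hmt (hQm m' j)
end

section
/- (Perturbed supercritical roots converge) Fix branching generating functions $B_i$ with $\rho(1,\dots,1)\le0$ (so the smallest nonnegative root of $B_1=\cdots=B_n=0$ in $[0,1]^n$ is $(1,\dots,1)$). For $\varepsilon>0$ define $B_i^{(\varepsilon)}(u)=B_i(u)-\varepsilon u_i$. Then the system $B_1^{(\varepsilon)}=\cdots=B_n^{(\varepsilon)}=0$ has a smallest nonnegative solution $(q_1^{(\varepsilon)},\dots,q_n^{(\varepsilon)})\in[0,1)^n$, and $(q_1^{(\varepsilon)},\dots,q_n^{(\varepsilon)})\uparrow(1,\dots,1)$ as $\varepsilon\downarrow0$. -/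
open Filter Topology Set

/-!
Write `B_i(u) = -c_i u_i + F_i(u)` with `c_i = F_i(1)` and `F_i` a power series with nonnegative
coefficients. For `ε > 0` the perturbed system is the fixed-point equation
`u_i = F_i(u) / (ε + c_i)` of a monotone self-map of the cube `[0,1]^n`, so by Knaster–Tarski it
has a least fixed point `q^ε`, which lies below every `r` in the cube with `B_i(r) ≤ ε r_i`. Since
`B_i(q^ε) = ε q^ε_i ≤ ε' q^ε_i` for `ε ≤ ε'`, this gives `q^ε' ≤ q^ε`, and `q^ε_i = 1` would force
`ε ≤ 0`. As `ε ↓ 0` the monotone family `q^ε` converges to some `L` in the cube, and by continuity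
of the `B_i` on the cube `B_i(L) = lim ε q^ε_i = 0`, so `L = 1` by hypothesis.
-/

open Function

theorem MonotoneOn.exists_fixedPoint_isLeast_Icc {α : Type*} [ConditionallyCompleteLattice α]
    {a b : α} (hab : a ≤ b) {f : α → α} (hmono : MonotoneOn f (Icc a b))
    (hmaps : MapsTo f (Icc a b) (Icc a b)) :
    ∃ x, f x = x ∧ IsLeast {y ∈ Icc a b | f y ≤ y} x := by
  have : Fact (a ≤ b) := ⟨hab⟩
  let g : Icc a b →o Icc a b := ⟨fun x => ⟨f x, hmaps x.2⟩, fun x y h => hmono x.2 y.2 h⟩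
  exact ⟨g.lfp, congrArg Subtype.val g.map_lfp, ⟨⟨g.lfp.2, (congrArg Subtype.val g.map_lfp).le⟩,
    fun y hy => g.lfp_le (a := ⟨y, hy.1⟩) hy.2⟩⟩

theorem mem_Icc_pi_iff {ι : Type*} {a b u : ι → ℝ} : u ∈ Icc a b ↔ ∀ l, u l ∈ Icc (a l) (b l) := by
  rw [← pi_univ_Icc, mem_univ_pi]

theorem hasSum_update_zero {α : Type*} [DecidableEq α] {a : α → ℝ} {e : α} {c : ℝ}
    (h : HasSum (fun j : {j // j ≠ e} => a j.1) c) : HasSum (update a e 0) c := by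
  have hsupp : support (update a e 0) ⊆ {j | j ≠ e} := fun j hj => by
    rintro rfl
    simp at hj
  have hrestrict : update a e 0 ∘ ((↑) : {j | j ≠ e} → α) = fun j => a j.1 :=
    funext fun j => update_of_ne j.2 _ _
  rw [← hasSum_subtype_iff_of_support_subset hsupp, hrestrict]
  exact h

theorem update_zero_nonneg {α : Type*} [DecidableEq α] {a : α → ℝ} {e : α}
    (hnn : ∀ j, j ≠ e → 0 ≤ a j) : 0 ≤ update a e 0 := fun j => by
  rcases eq_or_ne j e with rfl | hj
  · simp
  · simpa [hj] using hnn j hj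

section GeneratingFunction

variable {n : ℕ} {a : (Fin n → ℕ) → ℝ} {u : Fin n → ℝ}

theorem norm_gen_term_le (hu : u ∈ Icc 0 1) (j : Fin n → ℕ) :
    ‖a j * ∏ l, u l ^ j l‖ ≤ ‖a j‖ := by
  rw [norm_mul]
  refine mul_le_of_le_one_right (norm_nonneg _) ?_
  rw [norm_prod]
  refine Finset.prod_le_one (fun l _ => norm_nonneg _) fun l _ => ?_
  rw [norm_pow, Real.norm_of_nonneg (hu.1 l)]
  exact pow_le_one₀ (hu.1 l) (hu.2 l)

theorem summable_gen (hs : Summable a) (hu : u ∈ Icc 0 1) :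
    Summable fun j => a j * ∏ l, u l ^ j l :=
  hs.norm.of_norm_bounded (norm_gen_term_le hu)

theorem continuousOn_gen (hs : Summable a) : ContinuousOn (gen a) (Icc 0 1) :=
  continuousOn_tsum (fun j => by fun_prop) hs.norm fun j _ hu => norm_gen_term_le hu j

theorem gen_nonneg (ha : 0 ≤ a) (hu : 0 ≤ u) : 0 ≤ gen a u :=
  tsum_nonneg fun j => mul_nonneg (ha j) (Finset.prod_nonneg fun l _ => pow_nonneg (hu l) _)

theorem monotoneOn_gen (ha : 0 ≤ a) (hs : Summable a) : MonotoneOn (gen a) (Icc 0 1) := by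
  intro u hu v hv huv
  refine Summable.tsum_le_tsum (fun j => ?_) (summable_gen hs hu) (summable_gen hs hv)
  exact mul_le_mul_of_nonneg_left (Finset.prod_le_prod (fun l _ => pow_nonneg (hu.1 l) _)
    fun l _ => pow_le_pow_left₀ (hu.1 l) (huv l) _) (ha j)

theorem gen_one : gen a 1 = ∑' j, a j := by
  simp [gen]

theorem gen_eq_add_gen_update (hs : Summable fun j => a j * ∏ l, u l ^ j l) (e : Fin n → ℕ) :
    gen a u = a e * ∏ l, u l ^ e l + gen (update a e 0) u := by
  rw [gen, hs.tsum_eq_add_tsum_ite e, gen]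
  congr 2 with j
  by_cases hj : j = e <;> simp [hj]

theorem prod_pow_unitvec (u : Fin n → ℝ) (i : Fin n) : ∏ l, u l ^ unitvec i l = u i := by
  rw [Finset.prod_eq_single i] <;> simp +contextual [unitvec]

theorem gen_update_le {e : Fin n → ℕ} {c : ℝ}
    (hnn : ∀ j, j ≠ e → 0 ≤ a j) (h : HasSum (fun j : {j // j ≠ e} => a j.1) c)
    (hu : u ∈ Icc 0 1) : gen (update a e 0) u ≤ c := by
  have hupd := hasSum_update_zero h
  calc gen (update a e 0) u ≤ gen (update a e 0) 1 :=
        monotoneOn_gen (update_zero_nonneg hnn) hupd.summable hu ⟨zero_le_one, le_rfl⟩ hu.2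
    _ = c := by rw [gen_one, hupd.tsum_eq]

theorem gen_eq_add_gen_update_unitvec (hs : Summable a)
    (hu : u ∈ Icc 0 1) (i : Fin n) :
    gen a u = a (unitvec i) * u i + gen (update a (unitvec i) 0) u := by
  rw [gen_eq_add_gen_update (summable_gen hs hu) (unitvec i), prod_pow_unitvec]

end GeneratingFunction

section Perturbed

variable {n : ℕ} {b : Fin n → (Fin n → ℕ) → ℝ} {ε : ℝ} {u q : Fin n → ℝ}

/-- `u ↦ (F_i(u) / (ε + c_i))_i`, where `update (b i) (unitvec i) 0` are the coefficients of `F_i`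
and `c_i = -b i (unitvec i)`. -/
noncomputable def perturbedMap (b : Fin n → (Fin n → ℕ) → ℝ) (ε : ℝ) (u : Fin n → ℝ) :
    Fin n → ℝ :=
  fun i => gen (update (b i) (unitvec i) 0) u / (ε - b i (unitvec i))

theorem perturbedMap_le_iff {i : Fin n} (hs : Summable (b i)) (hu : u ∈ Icc 0 1)
    (hden : 0 < ε - b i (unitvec i)) : perturbedMap b ε u i ≤ u i ↔ gen (b i) u ≤ ε * u i := by
  rw [perturbedMap, div_le_iff₀ hden, gen_eq_add_gen_update_unitvec hs hu i]
  constructor <;> intro h <;> linarith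

theorem perturbedMap_eq_iff {i : Fin n} (hs : Summable (b i)) (hu : u ∈ Icc 0 1)
    (hden : 0 < ε - b i (unitvec i)) : perturbedMap b ε u i = u i ↔ gen (b i) u = ε * u i := by
  rw [perturbedMap, div_eq_iff hden.ne', gen_eq_add_gen_update_unitvec hs hu i]
  constructor <;> intro h <;> linarith

theorem monotoneOn_perturbedMap (hbnn : ∀ i j, j ≠ unitvec i → 0 ≤ b i j)
    (hbsum : ∀ i, Summable (b i)) (hden : ∀ i, 0 < ε - b i (unitvec i)) :
    MonotoneOn (perturbedMap b ε) (Icc 0 1) := fun _ hu _ hv huv i =>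
  div_le_div_of_nonneg_right (monotoneOn_gen (update_zero_nonneg (hbnn i))
    ((hbsum i).update _ _) hu hv huv) (hden i).le

theorem mapsTo_perturbedMap (hbnn : ∀ i j, j ≠ unitvec i → 0 ≤ b i j)
    (hbval : ∀ i, HasSum (fun j : {j : Fin n → ℕ // j ≠ unitvec i} => b i j.1)
      (-(b i (unitvec i))))
    (hε : 0 ≤ ε) : MapsTo (perturbedMap b ε) (Icc 0 1) (Icc 0 1) := fun u hu => by
  have hF_nonneg i : 0 ≤ gen (update (b i) (unitvec i) 0) u :=
    gen_nonneg (update_zero_nonneg (hbnn i)) hu.1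
  have hF_le i := gen_update_le (hbnn i) (hbval i) hu
  refine ⟨fun i => div_nonneg (hF_nonneg i) ?_, fun i => div_le_one_of_le₀ ?_ ?_⟩ <;>
    linarith [hF_nonneg i, hF_le i]

theorem exists_isLeast_perturbed_root (hbnn : ∀ i j, j ≠ unitvec i → 0 ≤ b i j)
    (hbsum : ∀ i, Summable (b i))
    (hbval : ∀ i, HasSum (fun j : {j : Fin n → ℕ // j ≠ unitvec i} => b i j.1)
      (-(b i (unitvec i))))
    (hε : 0 < ε) :
    ∃ q, (∀ i, gen (b i) q = ε * q i) ∧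
      IsLeast {r ∈ Icc 0 1 | ∀ i, gen (b i) r ≤ ε * r i} q := by
  have hden i : 0 < ε - b i (unitvec i) := by
    linarith [HasSum.nonneg (fun j : {j // j ≠ unitvec i} => hbnn i j.1 j.2) (hbval i)]
  obtain ⟨q, hfix, ⟨hq, -⟩, hq_least⟩ :=
    (monotoneOn_perturbedMap hbnn hbsum hden).exists_fixedPoint_isLeast_Icc zero_le_one
      (mapsTo_perturbedMap hbnn hbval hε.le)
  have hroot i : gen (b i) q = ε * q i :=
    (perturbedMap_eq_iff (hbsum i) hq (hden i)).1 (congrFun hfix i)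
  exact ⟨q, hroot, ⟨hq, fun i => (hroot i).le⟩, fun r ⟨hr, hr_sub⟩ =>
    hq_least ⟨hr, fun i => (perturbedMap_le_iff (hbsum i) hr (hden i)).2 (hr_sub i)⟩⟩

theorem perturbed_root_lt_one {i : Fin n} (hbnn : ∀ j, j ≠ unitvec i → 0 ≤ b i j)
    (hbsum : Summable (b i))
    (hbval : HasSum (fun j : {j : Fin n → ℕ // j ≠ unitvec i} => b i j.1) (-(b i (unitvec i))))
    (hε : 0 < ε) (hq : q ∈ Icc 0 1) (hroot : gen (b i) q = ε * q i) : q i < 1 := by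
  refine (hq.2 i).lt_of_ne fun hqi => ?_
  have hF_le := gen_update_le hbnn hbval hq
  rw [gen_eq_add_gen_update_unitvec hbsum hq i, hqi, Pi.one_apply] at hroot
  linarith

theorem AntitoneOn.exists_tendsto_nhdsGT_pi {ι : Type*} {Q : ℝ → ι → ℝ} {x : ℝ}
    (hanti : AntitoneOn Q (Ioi x)) (hbdd : ∀ l, BddAbove ((Q · l) '' Ioi x)) :
    ∃ L, Tendsto Q (𝓝[>] x) (𝓝 L) :=
  ⟨_, tendsto_pi_nhds.2 fun l =>
    AntitoneOn.tendsto_nhdsGT (fun _ ha _ hb hab => hanti ha hb hab l) (hbdd l)⟩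

theorem tendsto_perturbed_root (hbsum : ∀ i, Summable (b i)) {Q : ℝ → Fin n → ℝ}
    (hanti : AntitoneOn Q (Ioi 0)) (hmem : ∀ ε > 0, Q ε ∈ Icc 0 1)
    (hroot : ∀ ε > 0, ∀ i, gen (b i) (Q ε) = ε * Q ε i)
    (huniq : ∀ r ∈ Icc 0 1, (∀ i, gen (b i) r = 0) → r = 1) :
    Tendsto Q (𝓝[>] 0) (𝓝 1) := by
  obtain ⟨L, hL⟩ := hanti.exists_tendsto_nhdsGT_pi fun l =>
    ⟨1, by rintro _ ⟨ε, hε, rfl⟩; exact (hmem ε hε).2 l⟩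
  have hQ_ev : ∀ᶠ ε in 𝓝[>] 0, Q ε ∈ Icc 0 1 := eventually_nhdsWithin_of_forall hmem
  have hL_mem : L ∈ Icc 0 1 := isClosed_Icc.mem_of_tendsto hL hQ_ev
  suffices L = 1 by rwa [← this]
  refine huniq L hL_mem fun i => tendsto_nhds_unique
    ((continuousOn_gen (hbsum i) L hL_mem).tendsto.comp (tendsto_nhdsWithin_iff.2 ⟨hL, hQ_ev⟩)) ?_
  have hlim : Tendsto (fun ε => ε * Q ε i) (𝓝[>] 0) (𝓝 (0 * L i)) :=
    (tendsto_nhdsWithin_of_tendsto_nhds tendsto_id).mul ((continuous_apply i).tendsto L |>.comp hL)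
  rw [zero_mul] at hlim
  exact hlim.congr' (eventually_nhdsWithin_of_forall fun ε hε => (hroot ε hε i).symm)

end Perturbed

theorem stmt_16_general {n : ℕ} (b : Fin n → (Fin n → ℕ) → ℝ)
    (hbnn : ∀ i j, j ≠ unitvec i → 0 ≤ b i j)
    (hbsum : ∀ i, Summable (b i))
    (hbval : ∀ i, HasSum (fun j : {j : Fin n → ℕ // j ≠ unitvec i} => b i j.1)
      (-(b i (unitvec i))))
    -- `ρ(1,…,1) ≤ 0`: the smallest nonnegative root in `[0,1]^n` is `(1,…,1)`
    (hmin1 : ∀ r : Fin n → ℝ, (∀ l, r l ∈ Icc (0:ℝ) 1) →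
      (∀ i, gen (b i) r = 0) → r = fun _ => 1) :
    ∃ Q : ℝ → Fin n → ℝ,
      (∀ ε > (0:ℝ),
        (∀ l, Q ε l ∈ Ico (0:ℝ) 1) ∧
        (∀ i, gen (b i) (Q ε) - ε * Q ε i = 0) ∧
        (∀ r : Fin n → ℝ, (∀ l, r l ∈ Icc (0:ℝ) 1) →
          (∀ i, gen (b i) r - ε * r i = 0) → ∀ l, Q ε l ≤ r l)) ∧
      (∀ ε1 ε2 : ℝ, 0 < ε1 → ε1 ≤ ε2 → ∀ l, Q ε2 l ≤ Q ε1 l) ∧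
      Tendsto Q (nhdsWithin 0 (Ioi 0)) (nhds fun _ => 1) := by
  choose! Q hQ_root hQ_least using
    fun ε (hε : 0 < ε) => exists_isLeast_perturbed_root hbnn hbsum hbval hε
  have hQ_mem ε (hε : 0 < ε) : Q ε ∈ Icc 0 1 := (hQ_least ε hε).1.1
  have hQ_anti : AntitoneOn Q (Ioi 0) := fun ε₁ h₁ ε₂ h₂ h₁₂ =>
    (hQ_least ε₂ h₂).2 ⟨hQ_mem ε₁ h₁, fun i => by
      rw [hQ_root ε₁ h₁ i]
      exact mul_le_mul_of_nonneg_right h₁₂ ((hQ_mem ε₁ h₁).1 i)⟩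
  refine ⟨Q, fun ε hε => ⟨fun l => ⟨(hQ_mem ε hε).1 l, ?_⟩, fun i => ?_, fun r hr hroot => ?_⟩,
    fun ε₁ ε₂ h₁ h₁₂ => hQ_anti h₁ (h₁.trans_le h₁₂) h₁₂, ?_⟩
  · exact perturbed_root_lt_one (hbnn l) (hbsum l) (hbval l) hε (hQ_mem ε hε) (hQ_root ε hε l)
  · exact sub_eq_zero.2 (hQ_root ε hε i)
  · exact (hQ_least ε hε).2 ⟨mem_Icc_pi_iff.2 hr, fun i => (sub_eq_zero.1 (hroot i)).le⟩
  · exact tendsto_perturbed_root hbsum hQ_anti hQ_mem hQ_root fun r hr hr_root =>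
      hmin1 r (mem_Icc_pi_iff.1 hr) hr_root

/-- perturbed supercritical roots converge: if the smallest
nonnegative root of `B_1 = ⋯ = B_n = 0` in `[0,1]^n` is `(1,…,1)`
(`ρ(1,…,1) ≤ 0`), then for every `ε > 0` the perturbed system
`B_i(u) - ε u_i = 0` has a smallest nonnegative solution `q^{(ε)} ∈ [0,1)^n`,
and `q^{(ε)} ↑ (1,…,1)` as `ε ↓ 0`. -/
theorem stmt_16 {n : ℕ} (hn : 0 < n) (b : Fin n → (Fin n → ℕ) → ℝ)
    (hbnn : ∀ i j, j ≠ unitvec i → 0 ≤ b i j)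
    (hbsum : ∀ i, Summable (b i))
    (hbval : ∀ i, HasSum (fun j : {j : Fin n → ℕ // j ≠ unitvec i} => b i j.1)
      (-(b i (unitvec i))))
    (hbpos : ∀ i, 0 < -(b i (unitvec i)))
    -- positive regularity of the mean matrix and nonsingularity
    (Bm : Matrix (Fin n) (Fin n) ℝ)
    (hBm : ∀ i l, HasSum (fun j : Fin n → ℕ => b i j * (j l : ℝ)) (Bm i l))
    (G : Matrix (Fin n) (Fin n) ℝ)
    (hG : ∀ i l, G i l = (if i = l then (1:ℝ) else 0) - Bm i l / b i (unitvec i))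
    (hreg : ∃ N : ℕ, ∀ i l, 0 < (G ^ N) i l)
    (hns : ¬ ∃ M : Matrix (Fin n) (Fin n) ℝ,
      ∀ i, ∀ u : Fin n → ℝ, (∀ l, u l ∈ Icc (0:ℝ) 1) →
        gen (b i) u = ∑ l, M i l * u l)
    -- `ρ(1,…,1) ≤ 0`: the smallest nonnegative root in `[0,1]^n` is `(1,…,1)`
    (hroot1 : ∀ i, gen (b i) (fun _ => 1) = 0)
    (hmin1 : ∀ r : Fin n → ℝ, (∀ l, r l ∈ Icc (0:ℝ) 1) →
      (∀ i, gen (b i) r = 0) → r = fun _ => 1) :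
    ∃ Q : ℝ → Fin n → ℝ,
      (∀ ε > (0:ℝ),
        (∀ l, Q ε l ∈ Ico (0:ℝ) 1) ∧
        (∀ i, gen (b i) (Q ε) - ε * Q ε i = 0) ∧
        (∀ r : Fin n → ℝ, (∀ l, r l ∈ Icc (0:ℝ) 1) →
          (∀ i, gen (b i) r - ε * r i = 0) → ∀ l, Q ε l ≤ r l)) ∧
      (∀ ε1 ε2 : ℝ, 0 < ε1 → ε1 ≤ ε2 → ∀ l, Q ε2 l ≤ Q ε1 l) ∧
      Tendsto Q (nhdsWithin 0 (Ioi 0)) (nhds fun _ => 1) :=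
  stmt_16_general b hbnn hbsum hbval hmin1
end
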